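/- arXiv:2508.12999 — 6 statements merged into one kernel-verified Lean document; each statement's English description precedes it below -/
import Mathlib

section
/- Consider the storage scheduling LP over T time periods with charging efficiency η^C ∈ (0,1], discharging efficiency η^D ∈ (0,1], round-trip efficiency η = η^C·η^D < 1, and all prices strictly positive (C_t > 0 for all t). Then every optimal solution of the LP satisfies p_t^C · p_t^D = 0 for every time period t, i.e., no optimal solution exhibits simultaneous charge and discharge. -/
open Finset

def feasible (T : ℕ) (Δt ρ ηC ηD Slb Sub Sinit PC PD : ℝ)
    (s pC pD : ℕ → ℝ) : Prop :=
  s 0 = Sinit ∧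
  (∀ t ∈ Icc 1 T, s t = ρ * s (t - 1) + Δt * (ηC * pC t - (1 / ηD) * pD t)) ∧
  (∀ t ∈ Icc 1 T, Slb ≤ s t ∧ s t ≤ Sub) ∧
  (∀ t ∈ Icc 1 T, 0 ≤ pC t ∧ pC t ≤ PC) ∧
  (∀ t ∈ Icc 1 T, 0 ≤ pD t ∧ pD t ≤ PD)

def objective (T : ℕ) (Δt : ℝ) (C : ℕ → ℝ) (pC pD : ℕ → ℝ) : ℝ :=
  ∑ t ∈ Icc 1 T, Δt * C t * (pD t - pC t)

def optimal (T : ℕ) (Δt ρ ηC ηD Slb Sub Sinit PC PD : ℝ) (C : ℕ → ℝ)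
    (s pC pD : ℕ → ℝ) : Prop :=
  feasible T Δt ρ ηC ηD Slb Sub Sinit PC PD s pC pD ∧
  ∀ s' pC' pD', feasible T Δt ρ ηC ηD Slb Sub Sinit PC PD s' pC' pD' →
    objective T Δt C pC' pD' ≤ objective T Δt C pC pD

/-
Suppose an optimal schedule charges and discharges at the same time `t₀`. Lowering the charge
by `a > 0` and the discharge by `ηC ηD a` leaves the net energy flow `ηC pC - pD / ηD` at `t₀`, hence
the whole state trajectory, unchanged, so the new schedule is still feasible. It buys `a` units
less and sells only `ηC ηD a` units less, gaining `Δt C t₀ (1 - ηC ηD) a > 0`: a contradiction.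
-/

section Perturbation

variable {T : ℕ} {Δt ρ ηC ηD Slb Sub Sinit PC PD : ℝ} {s pC pD u v : ℕ → ℝ}

theorem feasible_sub_of_balanced
    (hfeas : feasible T Δt ρ ηC ηD Slb Sub Sinit PC PD s pC pD)
    (hbal : ∀ t ∈ Icc 1 T, ηC * u t = (1 / ηD) * v t)
    (hu : ∀ t ∈ Icc 1 T, 0 ≤ u t ∧ u t ≤ pC t)
    (hv : ∀ t ∈ Icc 1 T, 0 ≤ v t ∧ v t ≤ pD t) :
    feasible T Δt ρ ηC ηD Slb Sub Sinit PC PD s (pC - u) (pD - v) := by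
  obtain ⟨hs0, hdyn, hs, hpC, hpD⟩ := hfeas
  refine ⟨hs0, fun t ht => ?_, hs, fun t ht => ?_, fun t ht => ?_⟩
  · rw [hdyn t ht, Pi.sub_apply, Pi.sub_apply]
    linear_combination Δt * hbal t ht
  · have := hpC t ht; have := hu t ht
    simp only [Pi.sub_apply]; constructor <;> linarith
  · have := hpD t ht; have := hv t ht
    simp only [Pi.sub_apply]; constructor <;> linarith

theorem feasible_sub_single
    (hfeas : feasible T Δt ρ ηC ηD Slb Sub Sinit PC PD s pC pD) (hηD : ηD ≠ 0) {t₀ : ℕ} {a : ℝ}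
    (ha : 0 ≤ a) (haC : a ≤ pC t₀) (hb : 0 ≤ ηC * ηD * a) (hbD : ηC * ηD * a ≤ pD t₀) :
    feasible T Δt ρ ηC ηD Slb Sub Sinit PC PD s
      (pC - Pi.single t₀ a) (pD - Pi.single t₀ (ηC * ηD * a)) := by
  refine feasible_sub_of_balanced hfeas (fun t _ => ?_) (fun t ht => ?_) (fun t ht => ?_)
  · rcases eq_or_ne t t₀ with rfl | ht
    · simp only [Pi.single_eq_same]; field_simp
    · simp [ht]
  · rcases eq_or_ne t t₀ with rfl | ht' <;> simp [*, (hfeas.2.2.2.1 t ht).1]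
  · rcases eq_or_ne t t₀ with rfl | ht' <;> simp [*, (hfeas.2.2.2.2 t ht).1]

theorem objective_sub (C : ℕ → ℝ) :
    objective T Δt C (pC - u) (pD - v) =
      objective T Δt C pC pD + ∑ t ∈ Icc 1 T, Δt * C t * (u t - v t) := by
  simp only [objective, ← sum_add_distrib, Pi.sub_apply]
  exact sum_congr rfl fun _ _ => by ring

theorem objective_sub_single (C : ℕ → ℝ) {t₀ : ℕ} (ht₀ : t₀ ∈ Icc 1 T) (a b : ℝ) :
    objective T Δt C (pC - Pi.single t₀ a) (pD - Pi.single t₀ b) =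
      objective T Δt C pC pD + Δt * C t₀ * (a - b) := by
  rw [objective_sub, sum_eq_single_of_mem t₀ ht₀ fun t _ ht => by simp [ht]]
  simp

end Perturbation

theorem stmt0_general (T : ℕ) (Δt ρ ηC ηD Slb Sub Sinit PC PD : ℝ) (C : ℕ → ℝ)
    (hΔt : 0 < Δt)
    (hηC0 : 0 < ηC) (hηD0 : 0 < ηD)
    (hη : ηC * ηD < 1)
    (hC : ∀ t ∈ Icc 1 T, 0 < C t)
    (s pC pD : ℕ → ℝ)
    (hopt : optimal T Δt ρ ηC ηD Slb Sub Sinit PC PD C s pC pD) :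
    ∀ t ∈ Icc 1 T, pC t * pD t = 0 := by
  intro t₀ ht₀
  by_contra hsim
  obtain ⟨hfeas, hbest⟩ := hopt
  have hpC : 0 < pC t₀ := (hfeas.2.2.2.1 t₀ ht₀).1.lt_of_ne' (by rintro h; simp [h] at hsim)
  have hpD : 0 < pD t₀ := (hfeas.2.2.2.2 t₀ ht₀).1.lt_of_ne' (by rintro h; simp [h] at hsim)
  have hη0 : 0 < ηC * ηD := mul_pos hηC0 hηD0
  set a := min (pC t₀) (pD t₀ / (ηC * ηD))
  have ha : 0 < a := lt_min hpC (div_pos hpD hη0)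
  have hfeas' := feasible_sub_single hfeas hηD0.ne' ha.le (min_le_left _ _)
    (mul_pos hη0 ha).le ((le_div_iff₀' hη0).mp (min_le_right _ _))
  have hgain : 0 < Δt * C t₀ * (a - ηC * ηD * a) :=
    mul_pos (mul_pos hΔt (hC t₀ ht₀)) (by nlinarith)
  have hle := hbest _ _ _ hfeas'
  rw [objective_sub_single C ht₀] at hle
  linarith

theorem stmt0 (T : ℕ) (Δt ρ ηC ηD Slb Sub Sinit PC PD : ℝ) (C : ℕ → ℝ)
    (hΔt : 0 < Δt) (hρ0 : 0 < ρ) (hρ1 : ρ ≤ 1)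
    (hηC0 : 0 < ηC) (hηC1 : ηC ≤ 1) (hηD0 : 0 < ηD) (hηD1 : ηD ≤ 1)
    (hη : ηC * ηD < 1)
    (hS0 : 0 ≤ Slb) (hS : Slb < Sub) (hPC : 0 < PC) (hPD : 0 < PD)
    (hC : ∀ t ∈ Icc 1 T, 0 < C t)
    (s pC pD : ℕ → ℝ)
    (hopt : optimal T Δt ρ ηC ηD Slb Sub Sinit PC PD C s pC pD) :
    ∀ t ∈ Icc 1 T, pC t * pD t = 0 :=
  stmt0_general T Δt ρ ηC ηD Slb Sub Sinit PC PD C hΔt hηC0 hηD0 hη hC s pC pD hopt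
end

section
/- Consider the storage scheduling LP with round-trip efficiency η < 1 and all prices nonnegative (C_t ≥ 0 for all t). Then there exists an optimal solution of the LP with no simultaneous charge and discharge: any optimal solution can only exhibit simultaneous charge and discharge in time periods t with C_t = 0, and in such periods the charge and discharge quantities can be replaced (preserving the state trajectory) by a pure net charge or pure net discharge without changing the objective value or violating feasibility. -/
open Finset

/-!
Taking `ε` of charge and `ηC ηD ε` of discharge away in one period leaves the net charge
`ηC p^C - p^D / ηD`, hence the whole state trajectory, unchanged, and raises the objective by
`Δt C_t (1 - ηC ηD) ε`. Since `ηC ηD < 1`, an optimal solution can therefore charge and discharge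
simultaneously only where `C_t = 0`. There the objective ignores the powers, and the pure net
charge or discharge realising the same net charge is bounded componentwise by `(p^C_t, p^D_t)`,
so it stays feasible and optimal.
-/

section Schedule

variable {T : ℕ} {Δt ρ ηC ηD Slb Sub Sinit PC PD : ℝ} {C s pC pD pC' pD' : ℕ → ℝ}

theorem feasible.of_le_of_net_eq (h : feasible T Δt ρ ηC ηD Slb Sub Sinit PC PD s pC pD)
    (hC : ∀ t ∈ Icc 1 T, 0 ≤ pC' t ∧ pC' t ≤ pC t)
    (hD : ∀ t ∈ Icc 1 T, 0 ≤ pD' t ∧ pD' t ≤ pD t)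
    (hnet : ∀ t ∈ Icc 1 T, ηC * pC' t - 1 / ηD * pD' t = ηC * pC t - 1 / ηD * pD t) :
    feasible T Δt ρ ηC ηD Slb Sub Sinit PC PD s pC' pD' := by
  obtain ⟨hs0, hdyn, hs, hbC, hbD⟩ := h
  refine ⟨hs0, fun t ht => ?_, hs, fun t ht => ?_, fun t ht => ?_⟩
  · rw [hnet t ht, hdyn t ht]
  · exact ⟨(hC t ht).1, (hC t ht).2.trans (hbC t ht).2⟩
  · exact ⟨(hD t ht).1, (hD t ht).2.trans (hbD t ht).2⟩

theorem objective_update {t : ℕ} (ht : t ∈ Icc 1 T) (a b : ℝ) :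
    objective T Δt C (Function.update pC t a) (Function.update pD t b) =
      objective T Δt C pC pD + Δt * C t * ((b - a) - (pD t - pC t)) := by
  rw [← sub_eq_iff_eq_add', objective, objective, ← sum_sub_distrib, sum_eq_single_of_mem t ht]
  · simp only [Function.update_self]
    ring
  · intro u _ hu
    simp only [Function.update_of_ne hu, sub_self]

theorem objective_congr_of_price_eq_zero
    (h : ∀ t ∈ Icc 1 T, C t ≠ 0 → pC' t = pC t ∧ pD' t = pD t) :
    objective T Δt C pC' pD' = objective T Δt C pC pD := by
  refine sum_congr rfl fun t ht => ?_
  by_cases hCt : C t = 0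
  · simp [hCt]
  · rw [(h t ht hCt).1, (h t ht hCt).2]

theorem optimal.of_feasible_of_objective_eq
    (h : optimal T Δt ρ ηC ηD Slb Sub Sinit PC PD C s pC pD)
    (h' : feasible T Δt ρ ηC ηD Slb Sub Sinit PC PD s pC' pD')
    (hobj : objective T Δt C pC' pD' = objective T Δt C pC pD) :
    optimal T Δt ρ ηC ηD Slb Sub Sinit PC PD C s pC' pD' :=
  ⟨h', fun s'' pC'' pD'' h'' => hobj ▸ h.2 s'' pC'' pD'' h''⟩

theorem optimal.price_eq_zero_of_pos_of_pos (hΔt : 0 < Δt) (hηC : 0 < ηC) (hηD : 0 < ηD)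
    (hη : ηC * ηD < 1) (hopt : optimal T Δt ρ ηC ηD Slb Sub Sinit PC PD C s pC pD)
    {t : ℕ} (ht : t ∈ Icc 1 T) (hCt : 0 ≤ C t) (hpC : 0 < pC t) (hpD : 0 < pD t) :
    C t = 0 := by
  by_contra hne
  have hCpos : 0 < C t := hCt.lt_of_ne' hne
  have hη0 : 0 < ηC * ηD := mul_pos hηC hηD
  set ε := min (pC t) (pD t / (ηC * ηD))
  have hε : 0 < ε := lt_min hpC (div_pos hpD hη0)
  have hεC : ε ≤ pC t := min_le_left _ _
  have hεD : ηC * ηD * ε ≤ pD t := (le_div_iff₀' hη0).mp (min_le_right _ _)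
  have hfeas : feasible T Δt ρ ηC ηD Slb Sub Sinit PC PD s
      (Function.update pC t (pC t - ε)) (Function.update pD t (pD t - ηC * ηD * ε)) := by
    refine hopt.1.of_le_of_net_eq (fun u hu => ?_) (fun u hu => ?_) (fun u _ => ?_) <;>
      rcases eq_or_ne u t with rfl | hut
    · simp only [Function.update_self]; constructor <;> linarith
    · simp only [Function.update_of_ne hut]; exact ⟨(hopt.1.2.2.2.1 u hu).1, le_rfl⟩
    · simp only [Function.update_self]; constructor <;> nlinarith
    · simp only [Function.update_of_ne hut]; exact ⟨(hopt.1.2.2.2.2 u hu).1, le_rfl⟩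
    · simp only [Function.update_self]; field_simp; ring
    · simp only [Function.update_of_ne hut]
  have hgain : 0 < Δt * C t * ((1 - ηC * ηD) * ε) := by
    have : 0 < 1 - ηC * ηD := by linarith
    positivity
  have hle := hopt.2 _ _ _ hfeas
  rw [objective_update ht] at hle
  linarith [show (pD t - ηC * ηD * ε - (pC t - ε)) - (pD t - pC t) = (1 - ηC * ηD) * ε by ring]

end Schedule

section NetSplit

variable {Δt ηC ηD β : ℝ}

noncomputable def chargeOfNet (Δt ηC β : ℝ) : ℝ := if 0 ≤ β then β / (Δt * ηC) else 0

noncomputable def dischargeOfNet (Δt ηD β : ℝ) : ℝ := if 0 ≤ β then 0 else -(ηD * β) / Δt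

theorem chargeOfNet_mul_dischargeOfNet : chargeOfNet Δt ηC β * dischargeOfNet Δt ηD β = 0 := by
  unfold chargeOfNet dischargeOfNet
  split_ifs <;> simp

theorem chargeOfNet_nonneg (hΔt : 0 < Δt) (hηC : 0 < ηC) : 0 ≤ chargeOfNet Δt ηC β := by
  unfold chargeOfNet
  split_ifs with hβ
  · positivity
  · exact le_rfl

theorem dischargeOfNet_nonneg (hΔt : 0 < Δt) (hηD : 0 < ηD) : 0 ≤ dischargeOfNet Δt ηD β := by
  unfold dischargeOfNet
  split_ifs with hβ
  · exact le_rfl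
  · have : 0 ≤ -(ηD * β) := by nlinarith
    positivity

theorem chargeOfNet_le {pC pD : ℝ} (hΔt : 0 < Δt) (hηC : 0 < ηC) (hηD : 0 < ηD)
    (hpC : 0 ≤ pC) (hpD : 0 ≤ pD) : chargeOfNet Δt ηC (Δt * (ηC * pC - 1 / ηD * pD)) ≤ pC := by
  unfold chargeOfNet
  split_ifs with hβ
  · rw [div_le_iff₀ (by positivity)]
    have : 0 ≤ 1 / ηD * pD := by positivity
    nlinarith
  · exact hpC

theorem dischargeOfNet_le {pC pD : ℝ} (hΔt : 0 < Δt) (hηC : 0 < ηC) (hηD : 0 < ηD)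
    (hpC : 0 ≤ pC) (hpD : 0 ≤ pD) : dischargeOfNet Δt ηD (Δt * (ηC * pC - 1 / ηD * pD)) ≤ pD := by
  unfold dischargeOfNet
  split_ifs with hβ
  · exact hpD
  · have : -(ηD * (Δt * (ηC * pC - 1 / ηD * pD))) / Δt = pD - ηD * ηC * pC := by
      field_simp
      ring
    rw [this]
    have : 0 ≤ ηD * ηC * pC := by positivity
    linarith

theorem net_chargeOfNet_dischargeOfNet (hΔt : Δt ≠ 0) (hηC : ηC ≠ 0) (hηD : ηD ≠ 0) (x : ℝ) :
    ηC * chargeOfNet Δt ηC (Δt * x) - 1 / ηD * dischargeOfNet Δt ηD (Δt * x) = x := by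
  unfold chargeOfNet dischargeOfNet
  split_ifs <;> field_simp <;> ring

end NetSplit

section Split

variable {T : ℕ} {Δt ρ ηC ηD Slb Sub Sinit PC PD : ℝ} {C s pC pD : ℕ → ℝ}

noncomputable def splitCharge (Δt ρ ηC : ℝ) (C s pC : ℕ → ℝ) (t : ℕ) : ℝ :=
  if C t = 0 then chargeOfNet Δt ηC (s t - ρ * s (t - 1)) else pC t

noncomputable def splitDischarge (Δt ρ ηD : ℝ) (C s pD : ℕ → ℝ) (t : ℕ) : ℝ :=
  if C t = 0 then dischargeOfNet Δt ηD (s t - ρ * s (t - 1)) else pD t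

theorem feasible.split (hΔt : 0 < Δt) (hηC : 0 < ηC) (hηD : 0 < ηD)
    (h : feasible T Δt ρ ηC ηD Slb Sub Sinit PC PD s pC pD) :
    feasible T Δt ρ ηC ηD Slb Sub Sinit PC PD s
      (splitCharge Δt ρ ηC C s pC) (splitDischarge Δt ρ ηD C s pD) := by
  have ⟨_, hdyn, _, hbC, hbD⟩ := h
  have hβ : ∀ t ∈ Icc 1 T, s t - ρ * s (t - 1) = Δt * (ηC * pC t - 1 / ηD * pD t) :=
    fun t ht => by rw [hdyn t ht]; ring
  refine h.of_le_of_net_eq (fun t ht => ?_) (fun t ht => ?_) (fun t ht => ?_) <;>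
    by_cases hCt : C t = 0 <;>
    simp only [splitCharge, splitDischarge, hCt, if_true, if_false, hβ t ht]
  · exact ⟨chargeOfNet_nonneg hΔt hηC,
      chargeOfNet_le hΔt hηC hηD (hbC t ht).1 (hbD t ht).1⟩
  · exact ⟨(hbC t ht).1, le_rfl⟩
  · exact ⟨dischargeOfNet_nonneg hΔt hηD,
      dischargeOfNet_le hΔt hηC hηD (hbC t ht).1 (hbD t ht).1⟩
  · exact ⟨(hbD t ht).1, le_rfl⟩
  · exact net_chargeOfNet_dischargeOfNet hΔt.ne' hηC.ne' hηD.ne' _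

end Split

theorem stmt2_general (T : ℕ) (Δt ρ ηC ηD Slb Sub Sinit PC PD : ℝ) (C : ℕ → ℝ)
    (hΔt : 0 < Δt)
    (hηC0 : 0 < ηC) (hηD0 : 0 < ηD)
    (hη : ηC * ηD < 1)
    (hC : ∀ t ∈ Icc 1 T, 0 ≤ C t)
    (s pC pD : ℕ → ℝ)
    (hopt : optimal T Δt ρ ηC ηD Slb Sub Sinit PC PD C s pC pD) :
    (∀ t ∈ Icc 1 T, 0 < pC t → 0 < pD t → C t = 0) ∧
    ∃ pC' pD' : ℕ → ℝ,
      optimal T Δt ρ ηC ηD Slb Sub Sinit PC PD C s pC' pD' ∧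
      (∀ t ∈ Icc 1 T, pC' t * pD' t = 0) ∧
      (∀ t ∈ Icc 1 T, C t ≠ 0 → pC' t = pC t ∧ pD' t = pD t) ∧
      (∀ t ∈ Icc 1 T, C t = 0 →
        (0 ≤ s t - ρ * s (t - 1) →
          pC' t = (s t - ρ * s (t - 1)) / (Δt * ηC) ∧ pD' t = 0) ∧
        (s t - ρ * s (t - 1) < 0 →
          pC' t = 0 ∧ pD' t = -(ηD * (s t - ρ * s (t - 1))) / Δt)) := by
  have hsimul : ∀ t ∈ Icc 1 T, 0 < pC t → 0 < pD t → C t = 0 := fun t ht =>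
    hopt.price_eq_zero_of_pos_of_pos hΔt hηC0 hηD0 hη ht (hC t ht)
  have hkeep : ∀ t ∈ Icc 1 T, C t ≠ 0 →
      splitCharge Δt ρ ηC C s pC t = pC t ∧ splitDischarge Δt ρ ηD C s pD t = pD t :=
    fun t _ hCt => by simp [splitCharge, splitDischarge, hCt]
  refine ⟨hsimul, _, _, hopt.of_feasible_of_objective_eq (hopt.1.split hΔt hηC0 hηD0)
    (objective_congr_of_price_eq_zero hkeep), fun t ht => ?_, hkeep, fun t _ hCt => ?_⟩
  · by_cases hCt : C t = 0
    · simpa only [splitCharge, splitDischarge, hCt, if_true] using chargeOfNet_mul_dischargeOfNet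
    · rw [(hkeep t ht hCt).1, (hkeep t ht hCt).2, mul_eq_zero]
      by_contra! hpos
      exact hCt (hsimul t ht ((hopt.1.2.2.2.1 t ht).1.lt_of_ne' hpos.1)
        ((hopt.1.2.2.2.2 t ht).1.lt_of_ne' hpos.2))
  · simp only [splitCharge, splitDischarge, chargeOfNet, dischargeOfNet, hCt, if_true]
    exact ⟨fun hβ => by simp [hβ], fun hβ => by simp [not_le.mpr hβ]⟩

theorem stmt2 (T : ℕ) (Δt ρ ηC ηD Slb Sub Sinit PC PD : ℝ) (C : ℕ → ℝ)
    (hΔt : 0 < Δt) (hρ0 : 0 < ρ) (hρ1 : ρ ≤ 1)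
    (hηC0 : 0 < ηC) (hηC1 : ηC ≤ 1) (hηD0 : 0 < ηD) (hηD1 : ηD ≤ 1)
    (hη : ηC * ηD < 1)
    (hS0 : 0 ≤ Slb) (hS : Slb < Sub) (hPC : 0 < PC) (hPD : 0 < PD)
    (hC : ∀ t ∈ Icc 1 T, 0 ≤ C t)
    (s pC pD : ℕ → ℝ)
    (hopt : optimal T Δt ρ ηC ηD Slb Sub Sinit PC PD C s pC pD) :
    (∀ t ∈ Icc 1 T, 0 < pC t → 0 < pD t → C t = 0) ∧
    ∃ pC' pD' : ℕ → ℝ,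
      optimal T Δt ρ ηC ηD Slb Sub Sinit PC PD C s pC' pD' ∧
      (∀ t ∈ Icc 1 T, pC' t * pD' t = 0) ∧
      (∀ t ∈ Icc 1 T, C t ≠ 0 → pC' t = pC t ∧ pD' t = pD t) ∧
      (∀ t ∈ Icc 1 T, C t = 0 →
        (0 ≤ s t - ρ * s (t - 1) →
          pC' t = (s t - ρ * s (t - 1)) / (Δt * ηC) ∧ pD' t = 0) ∧
        (s t - ρ * s (t - 1) < 0 →
          pC' t = 0 ∧ pD' t = -(ηD * (s t - ρ * s (t - 1))) / Δt)) :=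
  stmt2_general T Δt ρ ηC ηD Slb Sub Sinit PC PD C hΔt hηC0 hηD0 hη hC s pC pD hopt
end

section
/- Consider the storage scheduling LP with η = η^C·η^D < 1. If an optimal solution exhibits simultaneous charge and discharge at time period t (p_t^C > 0 and p_t^D > 0), then C_t ≤ 0. In other words, simultaneous charge and discharge can only be optimal at times with nonpositive prices. -/
open Finset

/-!
If `p_t^C, p_t^D > 0`, lowering the charge at `t` by `ε` and the discharge by `η ε` leaves the
net energy flow `η^C p^C - p^D / η^D`, hence the whole state trajectory, unchanged, so the
schedule stays feasible. The objective changes by `Δt C_t (1 - η) ε`, which optimality forces to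
be nonpositive; as `Δt (1 - η) ε > 0`, this gives `C_t ≤ 0`.
-/

section Perturbation

variable {T : ℕ} {Δt ρ ηC ηD Slb Sub Sinit PC PD : ℝ} {s pC pD : ℕ → ℝ} {t : ℕ}

theorem feasible_update_of_netFlow_eq
    (hfeas : feasible T Δt ρ ηC ηD Slb Sub Sinit PC PD s pC pD) {c d : ℝ}
    (hflow : ηC * c - 1 / ηD * d = ηC * pC t - 1 / ηD * pD t)
    (hc : 0 ≤ c ∧ c ≤ PC) (hd : 0 ≤ d ∧ d ≤ PD) :
    feasible T Δt ρ ηC ηD Slb Sub Sinit PC PD s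
      (Function.update pC t c) (Function.update pD t d) := by
  obtain ⟨hinit, hdyn, hstate, hpC, hpD⟩ := hfeas
  refine ⟨hinit, fun u hu => ?_, hstate, fun u hu => ?_, fun u hu => ?_⟩ <;>
    rcases eq_or_ne u t with rfl | hut
  · simpa only [Function.update_self, hflow] using hdyn u hu
  · simpa only [Function.update_of_ne hut] using hdyn u hu
  · simpa only [Function.update_self] using hc
  · simpa only [Function.update_of_ne hut] using hpC u hu
  · simpa only [Function.update_self] using hd
  · simpa only [Function.update_of_ne hut] using hpD u hu

theorem objective_update_sub (C : ℕ → ℝ) (ht : t ∈ Icc 1 T) (c d : ℝ) :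
    objective T Δt C (Function.update pC t c) (Function.update pD t d) -
      objective T Δt C pC pD = Δt * C t * ((d - c) - (pD t - pC t)) := by
  unfold objective
  rw [← sum_sub_distrib, sum_eq_single_of_mem t ht]
  · simp only [Function.update_self]
    ring
  · intro u _ hut
    simp only [Function.update_of_ne hut, sub_self]

end Perturbation

theorem stmt3_general (T : ℕ) (Δt ρ ηC ηD Slb Sub Sinit PC PD : ℝ) (C : ℕ → ℝ)
    (hΔt : 0 < Δt)
    (hηC0 : 0 < ηC) (hηD0 : 0 < ηD)
    (hη : ηC * ηD < 1)
    (s pC pD : ℕ → ℝ)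
    (hopt : optimal T Δt ρ ηC ηD Slb Sub Sinit PC PD C s pC pD)
    (t : ℕ) (ht : t ∈ Icc 1 T) (hCch : 0 < pC t) (hDch : 0 < pD t) :
    C t ≤ 0 := by
  obtain ⟨hfeas, hmax⟩ := hopt
  obtain ⟨hpC, hpD⟩ := hfeas.2.2.2
  set η := ηC * ηD
  set ε := min (pC t) (pD t)
  have hε : 0 < ε := lt_min hCch hDch
  have hηε : 0 ≤ η * ε ∧ η * ε ≤ ε := ⟨by positivity, by nlinarith⟩
  have hflow : ηC * (pC t - ε) - 1 / ηD * (pD t - η * ε) = ηC * pC t - 1 / ηD * pD t := by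
    field_simp
    ring
  have hfeas' := feasible_update_of_netFlow_eq hfeas hflow
    ⟨by linarith [min_le_left (pC t) (pD t)], by linarith [(hpC t ht).2]⟩
    ⟨by linarith [min_le_right (pC t) (pD t)], by linarith [(hpD t ht).2]⟩
  have hgain := objective_update_sub (Δt := Δt) (pC := pC) (pD := pD) C ht
    (pC t - ε) (pD t - η * ε)
  have hle := hmax _ _ _ hfeas'
  have hpos : 0 < Δt * ((1 - η) * ε) := by
    have : 0 < 1 - η := by linarith
    positivity
  have hgain_nonpos : C t * (Δt * ((1 - η) * ε)) ≤ 0 := by linarith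
  exact nonpos_of_mul_nonpos_left hgain_nonpos hpos

theorem stmt3 (T : ℕ) (Δt ρ ηC ηD Slb Sub Sinit PC PD : ℝ) (C : ℕ → ℝ)
    (hΔt : 0 < Δt) (hρ0 : 0 < ρ) (hρ1 : ρ ≤ 1)
    (hηC0 : 0 < ηC) (hηC1 : ηC ≤ 1) (hηD0 : 0 < ηD) (hηD1 : ηD ≤ 1)
    (hη : ηC * ηD < 1)
    (hS0 : 0 ≤ Slb) (hS : Slb < Sub) (hPC : 0 < PC) (hPD : 0 < PD)
    (s pC pD : ℕ → ℝ)
    (hopt : optimal T Δt ρ ηC ηD Slb Sub Sinit PC PD C s pC pD)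
    (t : ℕ) (ht : t ∈ Icc 1 T) (hCch : 0 < pC t) (hDch : 0 < pD t) :
    C t ≤ 0 :=
  stmt3_general T Δt ρ ηC ηD Slb Sub Sinit PC PD C hΔt hηC0 hηD0 hη s pC pD hopt t ht hCch hDch
end

section
/- (Strictly negative price and intermediate net charge force simultaneous charge and discharge.) Consider the storage scheduling LP with η = η^C·η^D < 1 and a time period t with C_t < 0. If an optimal solution satisfies 0 ≤ s_t − ρ·s_{t−1} < Δt·η^C·P^C_max and p_t^D = 0 (no simultaneous charge and discharge at t), then it is not optimal: the modified solution that keeps the same state trajectory but sets p_t^{D'} = δ and p_t^{C'} = p_t^C + δ/(η^C·η^D), for any 0 < δ ≤ min{P^D_max, η^C·η^D·(P^C_max − p_t^C)}, is feasible and achieves objective value Z' = Z + Δt·C_t·δ·(1 − 1/η) > Z. Hence every optimal solution with net charge strictly between −Δt·(1/η^D)·P^D_max and Δt·η^C·P^C_max at a strictly-negative-price period exhibits simultaneous charge and discharge at that period. -/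
open Finset

/-!
Charging `a` more and discharging `ηC * ηD * a` more in the same period leaves the net charge,
hence the whole state trajectory, unchanged, and changes the objective by
`Δt * C t * a * (ηC * ηD - 1)`, which is positive when the price `C t` is negative and
`ηC * ηD < 1`: burning energy in the round-trip losses is paid for. An optimal schedule at a
negative-price period must therefore have no room left for such a cycle, i.e. charge or
discharge at full power. If the net charge is strictly inside its range, the power that is zero
cannot be the one at its maximum, so both powers are positive.
-/

section Perturbation

variable {T : ℕ} {Δt ρ ηC ηD Slb Sub Sinit PC PD : ℝ} {C s pC pD pC' pD' : ℕ → ℝ}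
  {t : ℕ}

theorem feasible_of_eq_of_ne (hf : feasible T Δt ρ ηC ηD Slb Sub Sinit PC PD s pC pD)
    (hC : ∀ u ≠ t, pC' u = pC u) (hD : ∀ u ≠ t, pD' u = pD u)
    (hnet : ηC * pC' t - 1 / ηD * pD' t = ηC * pC t - 1 / ηD * pD t)
    (hC' : 0 ≤ pC' t ∧ pC' t ≤ PC) (hD' : 0 ≤ pD' t ∧ pD' t ≤ PD) :
    feasible T Δt ρ ηC ηD Slb Sub Sinit PC PD s pC' pD' := by
  obtain ⟨h0, hdyn, hs, hpC, hpD⟩ := hf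
  refine ⟨h0, fun u hu => ?_, hs, fun u hu => ?_, fun u hu => ?_⟩ <;>
    rcases eq_or_ne u t with rfl | hut
  · rw [hnet]; exact hdyn u hu
  · rw [hC u hut, hD u hut]; exact hdyn u hu
  · exact hC'
  · rw [hC u hut]; exact hpC u hu
  · exact hD'
  · rw [hD u hut]; exact hpD u hu

theorem objective_eq_of_eq_of_ne (ht : t ∈ Icc 1 T)
    (hC : ∀ u ≠ t, pC' u = pC u) (hD : ∀ u ≠ t, pD' u = pD u) :
    objective T Δt C pC' pD' =
      objective T Δt C pC pD + Δt * C t * ((pD' t - pD t) - (pC' t - pC t)) := by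
  unfold objective
  rw [← add_sum_erase _ _ ht, ← add_sum_erase _ _ ht,
    sum_congr rfl fun u hu => by rw [hC u (ne_of_mem_erase hu), hD u (ne_of_mem_erase hu)]]
  ring

theorem feasible_and_objective_eq_of_cycle (hηC : 0 ≤ ηC) (hηD : 0 < ηD)
    (hf : feasible T Δt ρ ηC ηD Slb Sub Sinit PC PD s pC pD) (ht : t ∈ Icc 1 T)
    (hC : ∀ u ≠ t, pC' u = pC u) (hD : ∀ u ≠ t, pD' u = pD u) {a : ℝ} (ha : 0 ≤ a)
    (hCt : pC' t = pC t + a) (hDt : pD' t = pD t + ηC * ηD * a)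
    (hCmax : pC t + a ≤ PC) (hDmax : pD t + ηC * ηD * a ≤ PD) :
    feasible T Δt ρ ηC ηD Slb Sub Sinit PC PD s pC' pD' ∧
      objective T Δt C pC' pD' = objective T Δt C pC pD + Δt * C t * a * (ηC * ηD - 1) := by
  have hpC := hf.2.2.2.1 t ht
  have hpD := hf.2.2.2.2 t ht
  refine ⟨feasible_of_eq_of_ne hf hC hD ?_ ?_ ?_, ?_⟩
  · rw [hCt, hDt]; field_simp; ring
  · constructor <;> linarith
  · have : 0 ≤ ηC * ηD * a := by positivity
    constructor <;> linarith
  · rw [objective_eq_of_eq_of_ne ht hC hD, hCt, hDt]; ring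

theorem cycle_gain_pos (hΔt : 0 < Δt) (hCt : C t < 0) (hη : ηC * ηD < 1) {a : ℝ}
    (ha : 0 < a) :
    0 < Δt * C t * a * (ηC * ηD - 1) :=
  calc 0 < (Δt * a) * (C t * (ηC * ηD - 1)) :=
        mul_pos (mul_pos hΔt ha) (mul_pos_of_neg_of_neg hCt (sub_neg.2 hη))
    _ = Δt * C t * a * (ηC * ηD - 1) := by ring

theorem optimal_charge_eq_max_or_discharge_eq_max
    (hopt : optimal T Δt ρ ηC ηD Slb Sub Sinit PC PD C s pC pD) (ht : t ∈ Icc 1 T)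
    (hΔt : 0 < Δt) (hηC : 0 < ηC) (hηD : 0 < ηD) (hη : ηC * ηD < 1) (hCt : C t < 0) :
    pC t = PC ∨ pD t = PD := by
  by_contra! hne
  have hClt : pC t < PC := lt_of_le_of_ne (hopt.1.2.2.2.1 t ht).2 hne.1
  have hDlt : pD t < PD := lt_of_le_of_ne (hopt.1.2.2.2.2 t ht).2 hne.2
  have hη0 : 0 < ηC * ηD := mul_pos hηC hηD
  set a := min (PC - pC t) ((PD - pD t) / (ηC * ηD))
  have ha : 0 < a := lt_min (by linarith) (div_pos (by linarith) hη0)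
  have hCmax : a ≤ PC - pC t := min_le_left _ _
  have hDmax : ηC * ηD * a ≤ PD - pD t := (le_div_iff₀' hη0).1 (min_le_right _ _)
  obtain ⟨hfeas, hobj⟩ := feasible_and_objective_eq_of_cycle (C := C) hηC.le hηD hopt.1 ht
    (fun u hu => Function.update_of_ne hu _ pC) (fun u hu => Function.update_of_ne hu _ pD)
    ha.le (Function.update_self ..) (Function.update_self ..) (by linarith) (by linarith)
  linarith [hopt.2 _ _ _ hfeas, cycle_gain_pos hΔt hCt hη ha]

theorem cycle_improves_of_discharge_eq_zero
    (hf : feasible T Δt ρ ηC ηD Slb Sub Sinit PC PD s pC pD) (ht : t ∈ Icc 1 T)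
    (hΔt : 0 < Δt) (hηC : 0 < ηC) (hηD : 0 < ηD) (hη : ηC * ηD < 1) (hCt : C t < 0)
    (hpDt : pD t = 0) {δ : ℝ} (hδ : 0 < δ) (hδle : δ ≤ min PD (ηC * ηD * (PC - pC t))) :
    let pC' := fun u => if u = t then pC t + δ / (ηC * ηD) else pC u
    let pD' := fun u => if u = t then δ else pD u
    feasible T Δt ρ ηC ηD Slb Sub Sinit PC PD s pC' pD' ∧
      objective T Δt C pC' pD' =
        objective T Δt C pC pD + Δt * C t * δ * (1 - 1 / (ηC * ηD)) ∧
      objective T Δt C pC pD < objective T Δt C pC' pD' := by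
  intro pC' pD'
  have hη0 : 0 < ηC * ηD := mul_pos hηC hηD
  have hCmax : δ / (ηC * ηD) ≤ PC - pC t :=
    (div_le_iff₀' hη0).2 (hδle.trans (min_le_right _ _))
  have hDt : pD t + ηC * ηD * (δ / (ηC * ηD)) = δ := by
    rw [hpDt, mul_div_cancel₀ _ hη0.ne', zero_add]
  obtain ⟨hfeas, hobj⟩ := feasible_and_objective_eq_of_cycle (C := C) (pC' := pC') (pD' := pD')
    hηC.le hηD hf ht (fun u hu => if_neg hu) (fun u hu => if_neg hu) (by positivity)
    (if_pos rfl) ((if_pos rfl).trans hDt.symm) (by linarith)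
    (by linarith [min_le_left PD (ηC * ηD * (PC - pC t))])
  have hgain := cycle_gain_pos hΔt hCt hη (div_pos hδ hη0)
  have hgain_eq : Δt * C t * (δ / (ηC * ηD)) * (ηC * ηD - 1) =
      Δt * C t * δ * (1 - 1 / (ηC * ηD)) := by
    field_simp
  rw [hgain_eq] at hobj hgain
  exact ⟨hfeas, hobj, by linarith⟩

theorem charge_pos_and_discharge_pos_of_optimal
    (hopt : optimal T Δt ρ ηC ηD Slb Sub Sinit PC PD C s pC pD) (ht : t ∈ Icc 1 T)
    (hΔt : 0 < Δt) (hηC : 0 < ηC) (hηD : 0 < ηD) (hη : ηC * ηD < 1) (hCt : C t < 0)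
    (hPC : 0 < PC) (hPD : 0 < PD)
    (hlo : -(Δt * (1 / ηD) * PD) < s t - ρ * s (t - 1))
    (hhi : s t - ρ * s (t - 1) < Δt * ηC * PC) :
    0 < pC t ∧ 0 < pD t := by
  have hnet := hopt.1.2.1 t ht
  have hpC := hopt.1.2.2.2.1 t ht
  have hpD := hopt.1.2.2.2.2 t ht
  have hsat := optimal_charge_eq_max_or_discharge_eq_max hopt ht hΔt hηC hηD hη hCt
  constructor
  · by_contra! hC0
    have hDlt : pD t < PD := by
      rw [hnet, le_antisymm hC0 hpC.1] at hlo
      exact lt_of_mul_lt_mul_left (a := Δt * (1 / ηD)) (by linarith) (by positivity)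
    rcases hsat with h | h <;> linarith
  · by_contra! hD0
    have hClt : pC t < PC := by
      rw [hnet, le_antisymm hD0 hpD.1] at hhi
      exact lt_of_mul_lt_mul_left (a := Δt * ηC) (by linarith) (by positivity)
    rcases hsat with h | h <;> linarith

end Perturbation

theorem stmt6_general (T : ℕ) (Δt ρ ηC ηD Slb Sub Sinit PC PD : ℝ) (C : ℕ → ℝ)
    (hΔt : 0 < Δt)
    (hηC0 : 0 < ηC) (hηD0 : 0 < ηD)
    (hη : ηC * ηD < 1) (hPC : 0 < PC) (hPD : 0 < PD)
    (t : ℕ) (ht : t ∈ Icc 1 T) (hCt : C t < 0) :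
    (∀ s pC pD : ℕ → ℝ,
      feasible T Δt ρ ηC ηD Slb Sub Sinit PC PD s pC pD →
      0 ≤ s t - ρ * s (t - 1) → s t - ρ * s (t - 1) < Δt * ηC * PC →
      pD t = 0 →
      ∀ δ : ℝ, 0 < δ → δ ≤ min PD (ηC * ηD * (PC - pC t)) →
        feasible T Δt ρ ηC ηD Slb Sub Sinit PC PD s
          (fun u => if u = t then pC t + δ / (ηC * ηD) else pC u)
          (fun u => if u = t then δ else pD u) ∧
        objective T Δt C (fun u => if u = t then pC t + δ / (ηC * ηD) else pC u)
            (fun u => if u = t then δ else pD u)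
          = objective T Δt C pC pD + Δt * C t * δ * (1 - 1 / (ηC * ηD)) ∧
        objective T Δt C pC pD <
          objective T Δt C (fun u => if u = t then pC t + δ / (ηC * ηD) else pC u)
            (fun u => if u = t then δ else pD u)) ∧
    (∀ s pC pD : ℕ → ℝ,
      optimal T Δt ρ ηC ηD Slb Sub Sinit PC PD C s pC pD →
      -(Δt * (1 / ηD) * PD) < s t - ρ * s (t - 1) →
      s t - ρ * s (t - 1) < Δt * ηC * PC →
      0 < pC t ∧ 0 < pD t) :=
  ⟨fun _ _ _ hf _ _ hpDt _ hδ hδle =>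
      cycle_improves_of_discharge_eq_zero hf ht hΔt hηC0 hηD0 hη hCt hpDt hδ hδle,
    fun _ _ _ hopt hlo hhi =>
      charge_pos_and_discharge_pos_of_optimal hopt ht hΔt hηC0 hηD0 hη hCt hPC hPD hlo hhi⟩

theorem stmt6 (T : ℕ) (Δt ρ ηC ηD Slb Sub Sinit PC PD : ℝ) (C : ℕ → ℝ)
    (hΔt : 0 < Δt) (hρ0 : 0 < ρ) (hρ1 : ρ ≤ 1)
    (hηC0 : 0 < ηC) (hηC1 : ηC ≤ 1) (hηD0 : 0 < ηD) (hηD1 : ηD ≤ 1)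
    (hη : ηC * ηD < 1) (hPC : 0 < PC) (hPD : 0 < PD)
    (t : ℕ) (ht : t ∈ Icc 1 T) (hCt : C t < 0) :
    (∀ s pC pD : ℕ → ℝ,
      feasible T Δt ρ ηC ηD Slb Sub Sinit PC PD s pC pD →
      0 ≤ s t - ρ * s (t - 1) → s t - ρ * s (t - 1) < Δt * ηC * PC →
      pD t = 0 →
      ∀ δ : ℝ, 0 < δ → δ ≤ min PD (ηC * ηD * (PC - pC t)) →
        feasible T Δt ρ ηC ηD Slb Sub Sinit PC PD s
          (fun u => if u = t then pC t + δ / (ηC * ηD) else pC u)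
          (fun u => if u = t then δ else pD u) ∧
        objective T Δt C (fun u => if u = t then pC t + δ / (ηC * ηD) else pC u)
            (fun u => if u = t then δ else pD u)
          = objective T Δt C pC pD + Δt * C t * δ * (1 - 1 / (ηC * ηD)) ∧
        objective T Δt C pC pD <
          objective T Δt C (fun u => if u = t then pC t + δ / (ηC * ηD) else pC u)
            (fun u => if u = t then δ else pD u)) ∧
    (∀ s pC pD : ℕ → ℝ,
      optimal T Δt ρ ηC ηD Slb Sub Sinit PC PD C s pC pD →
      -(Δt * (1 / ηD) * PD) < s t - ρ * s (t - 1) →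
      s t - ρ * s (t - 1) < Δt * ηC * PC →
      0 < pC t ∧ 0 < pD t) :=
  stmt6_general T Δt ρ ηC ηD Slb Sub Sinit PC PD C hΔt hηC0 hηD0 hη hPC hPD t ht hCt
end

section
/- (Theorem 1.) Consider the storage scheduling LP with η < 1, Assumption (1−ρ)·S_ub ≤ Δt·η^C·P^C_max, and let [τ1, τ2] with n̄ = τ2 − τ1 + 1 be the longest compact interval of strictly negative prices. Suppose: (1) ρ^{n̄}·S_lb + Δt·η^C·P^C_max·Σ_{t=1}^{n̄} ρ^{n̄−t} > S_ub; and (2) there is no partition T^C ∪ T^D = [τ1, τ2] and level s ∈ [S_lb, S_ub] with ρ^{n̄}·s + Δt·(η^C·P^C_max·Σ_{t∈T^C} ρ^{τ2−t} − (1/η^D)·P^D_max·Σ_{t∈T^D} ρ^{τ2−t}) = S_ub. Then the linear relaxation is inexact: every optimal solution of the LP exhibits simultaneous charge and discharge. -/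
open Finset

lemma sum_shift (a b c : ℕ) (f : ℕ → ℝ) :
    ∑ t ∈ Icc (a+c) (b+c), f t = ∑ t ∈ Icc a b, f (t+c) := by
  rw [← Finset.map_add_right_Icc, Finset.sum_map]; rfl


lemma unroll (T : ℕ) (Δt ρ ηC ηD : ℝ) (s pC pD : ℕ → ℝ)
    (hrec : ∀ t ∈ Icc 1 T, s t = ρ * s (t - 1) + Δt * (ηC * pC t - (1 / ηD) * pD t))
    (a : ℕ) : ∀ b, a ≤ b → b ≤ T →
    s b = ρ ^ (b - a) * s a +
      ∑ t ∈ Icc (a+1) b, ρ ^ (b - t) * (Δt * (ηC * pC t - (1 / ηD) * pD t)) := by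
  intro b hab
  induction b, hab using Nat.le_induction with
  | base =>
    intro _
    simp [Nat.sub_self]
  | succ n hn ih =>
    intro hnT
    have hrc := hrec (n+1) (by simp; omega)
    have h1 : (n+1) - 1 = n := by omega
    rw [h1] at hrc
    rw [hrc, ih (by omega)]
    rw [Finset.sum_Icc_succ_top (by omega : a + 1 ≤ n + 1)]
    have h2 : n + 1 - a = (n - a) + 1 := by omega
    have h3 : ∀ t ∈ Icc (a+1) n, ρ ^ (n + 1 - t) * (Δt * (ηC * pC t - (1 / ηD) * pD t))
        = ρ * (ρ ^ (n - t) * (Δt * (ηC * pC t - (1 / ηD) * pD t))) := by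
      intro t ht
      simp only [mem_Icc] at ht
      have : n + 1 - t = (n - t) + 1 := by omega
      rw [this, pow_succ]
      ring
    rw [Finset.sum_congr rfl h3, h2, pow_succ]
    have h4 : n + 1 - (n+1) = 0 := by omega
    rw [h4, ← Finset.mul_sum]
    ring

lemma obj_diff (T : ℕ) (Δt : ℝ) (C pC pD pC' pD' : ℕ → ℝ) (t0 : ℕ) (ht0 : t0 ∈ Icc 1 T)
    (h : ∀ t ∈ Icc 1 T, t ≠ t0 → pC' t = pC t ∧ pD' t = pD t) :
    objective T Δt C pC' pD' = objective T Δt C pC pD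
      + Δt * C t0 * ((pD' t0 - pC' t0) - (pD t0 - pC t0)) := by
  have : objective T Δt C pC' pD' - objective T Δt C pC pD
      = ∑ t ∈ Icc 1 T, (Δt * C t * (pD' t - pC' t) - Δt * C t * (pD t - pC t)) := by
    rw [Finset.sum_sub_distrib]; rfl
  rw [Finset.sum_eq_single_of_mem t0 ht0 (by
    intro t ht htne
    obtain ⟨h1, h2⟩ := h t ht htne
    rw [h1, h2]; ring)] at this
  linarith [this]

lemma obj_diff2 (T : ℕ) (Δt : ℝ) (C pC pD pC' pD' : ℕ → ℝ) (t0 w : ℕ)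
    (ht0 : t0 ∈ Icc 1 T) (hw : w ∈ Icc 1 T) (hne : t0 ≠ w)
    (h : ∀ t ∈ Icc 1 T, t ≠ t0 → t ≠ w → pC' t = pC t ∧ pD' t = pD t) :
    objective T Δt C pC' pD' = objective T Δt C pC pD
      + Δt * C t0 * ((pD' t0 - pC' t0) - (pD t0 - pC t0))
      + Δt * C w * ((pD' w - pC' w) - (pD w - pC w)) := by
  have key : objective T Δt C pC' pD' - objective T Δt C pC pD
      = ∑ t ∈ Icc 1 T, (Δt * C t * (pD' t - pC' t) - Δt * C t * (pD t - pC t)) := by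
    rw [Finset.sum_sub_distrib]; rfl
  have hsub : ({t0, w} : Finset ℕ) ⊆ Icc 1 T := by
    intro x hx; simp at hx; rcases hx with h1 | h1 <;> subst h1 <;> assumption
  rw [← Finset.sum_subset hsub (by
    intro t ht htn
    simp at htn
    obtain ⟨h1, h2⟩ := h t ht htn.1 htn.2
    rw [h1, h2]; ring)] at key
  rw [Finset.sum_pair hne] at key
  linarith [key]


lemma burn (T : ℕ) (Δt ρ ηC ηD Slb Sub Sinit PC PD : ℝ) (C : ℕ → ℝ) (s pC pD : ℕ → ℝ)
    (hΔt : 0 < Δt) (hηC0 : 0 < ηC) (hηD0 : 0 < ηD) (hη : ηC * ηD < 1)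
    (hPC : 0 < PC) (hPD : 0 < PD)
    (hopt : optimal T Δt ρ ηC ηD Slb Sub Sinit PC PD C s pC pD)
    (hns : ∀ t ∈ Icc 1 T, pC t = 0 ∨ pD t = 0)
    (t0 : ℕ) (ht0 : t0 ∈ Icc 1 T) (hC : C t0 < 0) :
    (pC t0 = PC ∧ pD t0 = 0) ∨ (pD t0 = PD ∧ pC t0 = 0) := by
  obtain ⟨⟨hs0, hrec, hbnd, hpCb, hpDb⟩, hbest⟩ := hopt
  by_contra hcon
  push_neg at hcon
  obtain ⟨hc1, hc2⟩ := hcon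
  have hηD : ηD ≠ 0 := ne_of_gt hηD0
  have hpC0 := (hpCb t0 ht0).1
  have hpC1 := (hpCb t0 ht0).2
  have hpD0 := (hpDb t0 ht0).1
  have hpD1 := (hpDb t0 ht0).2
  have hroom : pC t0 < PC ∧ pD t0 < PD := by
    rcases hns t0 ht0 with h0 | h0
    · refine ⟨by rw [h0]; exact hPC, ?_⟩
      rcases lt_or_eq_of_le hpD1 with h | h
      · exact h
      · exact absurd h0 (hc2 h).elim
    · refine ⟨?_, by rw [h0]; exact hPD⟩
      rcases lt_or_eq_of_le hpC1 with h | h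
      · exact h
      · exact absurd h0 (hc1 h).elim
  set γ := min (PC - pC t0) ((PD - pD t0) / (ηC * ηD)) with hγdef
  have hγ : 0 < γ := by
    apply lt_min
    · linarith [hroom.1]
    · apply div_pos (by linarith [hroom.2]) (by positivity)
  have hγ1 : γ ≤ PC - pC t0 := min_le_left _ _
  have hγ2 : γ ≤ (PD - pD t0) / (ηC * ηD) := min_le_right _ _
  have hγ2' : γ * (ηC * ηD) ≤ PD - pD t0 := (le_div_iff₀ (by positivity)).mp hγ2
  set pC' := Function.update pC t0 (pC t0 + γ) with hpC'def
  set pD' := Function.update pD t0 (pD t0 + ηC * ηD * γ) with hpD'def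
  have hct0 : pC' t0 = pC t0 + γ := Function.update_self _ _ _
  have hdt0 : pD' t0 = pD t0 + ηC * ηD * γ := Function.update_self _ _ _
  have hγηpos : 0 < ηC * ηD * γ := by positivity
  have hfeas : feasible T Δt ρ ηC ηD Slb Sub Sinit PC PD s pC' pD' := by
    refine ⟨hs0, ?_, hbnd, ?_, ?_⟩
    · intro t ht
      rcases eq_or_ne t t0 with h | h
      · have hid : ηC * (pC t0 + γ) - 1/ηD * (pD t0 + ηC * ηD * γ)
            = ηC * pC t0 - 1/ηD * pD t0 := by
          field_simp
          ring
        rw [h, hct0, hdt0, hid]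
        exact hrec t0 (h ▸ ht)
      · rw [hpC'def, hpD'def, Function.update_of_ne h, Function.update_of_ne h]
        exact hrec t ht
    · intro t ht
      rcases eq_or_ne t t0 with h | h
      · rw [h, hct0]
        constructor
        · linarith
        · linarith
      · rw [hpC'def, Function.update_of_ne h]; exact hpCb t ht
    · intro t ht
      rcases eq_or_ne t t0 with h | h
      · rw [h, hdt0]
        constructor
        · linarith
        · linarith
      · rw [hpD'def, Function.update_of_ne h]; exact hpDb t ht
  have hobj := obj_diff T Δt C pC pD pC' pD' t0 ht0 (by
    intro t ht htne
    rw [hpC'def, hpD'def, Function.update_of_ne htne, Function.update_of_ne htne]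
    exact ⟨rfl, rfl⟩)
  rw [hct0, hdt0] at hobj
  have hle := hbest s pC' pD' hfeas
  have hkey : Δt * C t0 * ((pD t0 + ηC * ηD * γ - (pC t0 + γ)) - (pD t0 - pC t0))
      = (Δt * γ) * (C t0 * (ηC * ηD - 1)) := by ring
  have hpos : 0 < (Δt * γ) * (C t0 * (ηC * ηD - 1)) := by
    apply mul_pos (by positivity)
    exact mul_pos_of_neg_of_neg hC (by linarith)
  rw [hkey] at hobj
  linarith

lemma window_eq (T : ℕ) (Δt ρ ηC ηD PC PD : ℝ) (s pC pD : ℕ → ℝ)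
    (hrec : ∀ t ∈ Icc 1 T, s t = ρ * s (t - 1) + Δt * (ηC * pC t - (1 / ηD) * pD t))
    (a b : ℕ) (ha : 1 ≤ a) (hab : a ≤ b) (hbT : b ≤ T)
    (hbb : ∀ t ∈ Icc a b, (pC t = PC ∧ pD t = 0) ∨ (pD t = PD ∧ pC t = 0)) :
    ∃ TC TD : Finset ℕ, TC ∪ TD = Icc a b ∧
      (∀ t ∈ TC, pC t = PC ∧ pD t = 0) ∧ (∀ t ∈ TD, pD t = PD ∧ pC t = 0) ∧
      s b = ρ ^ (b - a + 1) * s (a - 1) +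
        Δt * (ηC * PC * ∑ t ∈ TC, ρ ^ (b - t) -
          (1 / ηD) * PD * ∑ t ∈ TD, ρ ^ (b - t)) := by
  set TC := (Icc a b).filter (fun t => pC t = PC ∧ pD t = 0) with hTCdef
  set TD := Icc a b \ TC with hTDdef
  have hTCsub : TC ⊆ Icc a b := Finset.filter_subset _ _
  have hUnion : TC ∪ TD = Icc a b := Finset.union_sdiff_of_subset hTCsub
  have hTCprop : ∀ t ∈ TC, pC t = PC ∧ pD t = 0 := by
    intro t ht; exact (Finset.mem_filter.mp ht).2
  have hTDprop : ∀ t ∈ TD, pD t = PD ∧ pC t = 0 := by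
    intro t ht
    obtain ⟨htm, htn⟩ := Finset.mem_sdiff.mp ht
    rcases hbb t htm with h | h
    · exact absurd (Finset.mem_filter.mpr ⟨htm, h⟩) htn
    · exact h
  refine ⟨TC, TD, hUnion, hTCprop, hTDprop, ?_⟩
  have hu := unroll T Δt ρ ηC ηD s pC pD hrec (a-1) b (by omega) hbT
  have h1 : a - 1 + 1 = a := by omega
  have h2 : b - (a-1) = b - a + 1 := by omega
  rw [h1, h2] at hu
  rw [hu]
  have hsplit : ∑ t ∈ Icc a b, ρ ^ (b - t) * (Δt * (ηC * pC t - (1 / ηD) * pD t))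
      = ∑ t ∈ TC, ρ ^ (b - t) * (Δt * (ηC * pC t - (1 / ηD) * pD t))
        + ∑ t ∈ TD, ρ ^ (b - t) * (Δt * (ηC * pC t - (1 / ηD) * pD t)) := by
    rw [← hUnion, Finset.sum_union Finset.disjoint_sdiff]
  have hC1 : ∑ t ∈ TC, ρ ^ (b - t) * (Δt * (ηC * pC t - (1 / ηD) * pD t))
      = ∑ t ∈ TC, (Δt * ηC * PC) * ρ ^ (b - t) := by
    apply Finset.sum_congr rfl
    intro t ht
    obtain ⟨e1, e2⟩ := hTCprop t ht
    rw [e1, e2]; ring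
  have hC2 : ∑ t ∈ TD, ρ ^ (b - t) * (Δt * (ηC * pC t - (1 / ηD) * pD t))
      = ∑ t ∈ TD, (-(Δt * (1/ηD) * PD)) * ρ ^ (b - t) := by
    apply Finset.sum_congr rfl
    intro t ht
    obtain ⟨e1, e2⟩ := hTDprop t ht
    rw [e1, e2]; ring
  rw [hsplit, hC1, hC2, ← Finset.mul_sum, ← Finset.mul_sum]
  ring

lemma imp1 (T : ℕ) (Δt ρ ηC ηD Slb Sub Sinit PC PD : ℝ) (C : ℕ → ℝ) (s pC pD : ℕ → ℝ)
    (hΔt : 0 < Δt) (hρ0 : 0 < ρ) (hρ1 : ρ ≤ 1) (hηC0 : 0 < ηC) (hPC : 0 < PC)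
    (hopt : optimal T Δt ρ ηC ηD Slb Sub Sinit PC PD C s pC pD)
    (t0 : ℕ) (ht0 : t0 ∈ Icc 1 T) (hC : C t0 < 0) (hpc : pC t0 = 0)
    (hslack : ∀ u ∈ Icc t0 T, s u < Sub) : False := by
  obtain ⟨⟨hs0, hrec, hbnd, hpCb, hpDb⟩, hbest⟩ := hopt
  simp only [mem_Icc] at ht0
  obtain ⟨ht01, ht0T⟩ := ht0
  set K := Δt * ηC with hKdef
  have hK : 0 < K := by positivity
  have hne : ((Icc t0 T).image (fun u => Sub - s u)).Nonempty := by
    apply Finset.Nonempty.image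
    exact ⟨t0, by simp [mem_Icc]; omega⟩
  set δ := ((Icc t0 T).image (fun u => Sub - s u)).min' hne with hδdef
  have hδpos : 0 < δ := by
    obtain ⟨u, hu, huq⟩ := Finset.mem_image.mp (Finset.min'_mem _ hne)
    rw [hδdef, ← huq]
    have := hslack u hu
    linarith
  have hδle : ∀ u, t0 ≤ u → u ≤ T → δ ≤ Sub - s u := by
    intro u h1 h2
    exact Finset.min'_le _ _ (Finset.mem_image_of_mem _ (by simp [mem_Icc]; omega))
  set ε := min (δ / K) PC with hεdef
  have hε : 0 < ε := lt_min (by positivity) hPC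
  have hεK : K * ε ≤ δ := by
    have h1 : ε ≤ δ / K := min_le_left _ _
    calc K * ε ≤ K * (δ / K) := by nlinarith
    _ = δ := by field_simp
  set pC' := Function.update pC t0 ε with hpC'def
  set s' := fun u => if t0 ≤ u then s u + K * ρ ^ (u - t0) * ε else s u with hs'def
  have hs'lt : ∀ u, u < t0 → s' u = s u := by
    intro u hu; simp only [hs'def]; rw [if_neg (by omega)]
  have hs'ge : ∀ u, t0 ≤ u → s' u = s u + K * ρ ^ (u - t0) * ε := by
    intro u hu; simp only [hs'def]; rw [if_pos hu]
  have hadd_nonneg : ∀ u : ℕ, 0 ≤ K * ρ ^ (u - t0) * ε := by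
    intro u; positivity
  have hadd_le : ∀ u : ℕ, K * ρ ^ (u - t0) * ε ≤ δ := by
    intro u
    have h1 : ρ ^ (u - t0) ≤ 1 := pow_le_one₀ (le_of_lt hρ0) hρ1
    nlinarith [hadd_nonneg u, mul_pos hK hε]
  have hfeas : feasible T Δt ρ ηC ηD Slb Sub Sinit PC PD s' pC' pD := by
    refine ⟨?_, ?_, ?_, ?_, hpDb⟩
    · rw [hs'lt 0 (by omega)]; exact hs0
    · intro t ht
      simp only [mem_Icc] at ht
      rcases Nat.lt_trichotomy t t0 with h | h | h
      · rw [hs'lt t h, hs'lt (t-1) (by omega), hpC'def, Function.update_of_ne (by omega)]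
        exact hrec t (by simp [mem_Icc]; omega)
      · subst h
        rw [hs'ge t le_rfl, hs'lt (t-1) (by omega), hpC'def, Function.update_self]
        have := hrec t (by simp [mem_Icc]; omega)
        rw [this, hpc, Nat.sub_self, pow_zero]
        ring
      · rw [hs'ge t (by omega), hs'ge (t-1) (by omega), hpC'def,
          Function.update_of_ne (by omega)]
        have hrw := hrec t (by simp [mem_Icc]; omega)
        have hpow : ρ ^ (t - t0) = ρ * ρ ^ (t - 1 - t0) := by
          have : t - t0 = (t - 1 - t0) + 1 := by omega
          rw [this, pow_succ]; ring
        rw [hrw, hpow]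
        ring
    · intro t ht
      simp only [mem_Icc] at ht
      rcases Nat.lt_or_ge t t0 with h | h
      · rw [hs'lt t h]; exact hbnd t (by simp [mem_Icc]; omega)
      · rw [hs'ge t h]
        have hb := hbnd t (by simp [mem_Icc]; omega)
        have h1 := hadd_nonneg t
        have h2 := hadd_le t
        have h3 := hδle t h ht.2
        constructor <;> linarith
    · intro t ht
      rcases eq_or_ne t t0 with h | h
      · rw [h, hpC'def, Function.update_self]
        exact ⟨le_of_lt hε, min_le_right _ _⟩
      · rw [hpC'def, Function.update_of_ne h]; exact hpCb t ht
  have hobj := obj_diff T Δt C pC pD pC' pD t0 (by simp [mem_Icc]; omega) (by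
    intro t ht htne
    rw [hpC'def, Function.update_of_ne htne]
    exact ⟨rfl, rfl⟩)
  rw [hpC'def] at hobj
  rw [Function.update_self] at hobj
  have hle := hbest s' pC' pD hfeas
  have hpos : 0 < Δt * (-C t0) * ε := mul_pos (mul_pos hΔt (by linarith)) hε
  have : Δt * C t0 * ((pD t0 - ε) - (pD t0 - pC t0)) = Δt * (-C t0) * ε + Δt*C t0*pC t0 := by ring
  rw [hpc] at hobj
  nlinarith [hobj, hle, hpos]

set_option maxHeartbeats 2000000 in
lemma imp2 (T : ℕ) (Δt ρ ηC ηD Slb Sub Sinit PC PD : ℝ) (C : ℕ → ℝ) (s pC pD : ℕ → ℝ)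
    (hΔt : 0 < Δt) (hρ0 : 0 < ρ) (hρ1 : ρ ≤ 1)
    (hηC0 : 0 < ηC) (hηC1 : ηC ≤ 1) (hηD0 : 0 < ηD) (hηD1 : ηD ≤ 1) (hPC : 0 < PC)
    (hopt : optimal T Δt ρ ηC ηD Slb Sub Sinit PC PD C s pC pD)
    (t0 w : ℕ) (ht0 : t0 ∈ Icc 1 T) (hwT : w ∈ Icc 1 T) (htw : t0 < w)
    (hC : C t0 < 0) (hCw : 0 ≤ C w) (hpc : pC t0 = 0)
    (hcap : 0 < pC w ∨ pD w < PD)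
    (hslack : ∀ u, t0 ≤ u → u < w → s u < Sub) : False := by
  obtain ⟨⟨hs0, hrec, hbnd, hpCb, hpDb⟩, hbest⟩ := hopt
  simp only [mem_Icc] at ht0 hwT
  obtain ⟨ht01, ht0T⟩ := ht0
  have hηD : ηD ≠ 0 := ne_of_gt hηD0
  set K := Δt * ηC with hKdef
  have hK : 0 < K := by positivity
  have hne : ((Icc t0 (w-1)).image (fun u => Sub - s u)).Nonempty := by
    apply Finset.Nonempty.image
    exact ⟨t0, by simp [mem_Icc]; omega⟩
  set δ := ((Icc t0 (w-1)).image (fun u => Sub - s u)).min' hne with hδdef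
  have hδpos : 0 < δ := by
    obtain ⟨u, hu, huq⟩ := Finset.mem_image.mp (Finset.min'_mem _ hne)
    rw [hδdef, ← huq]
    simp only [mem_Icc] at hu
    have := hslack u hu.1 (by omega)
    linarith
  have hδle : ∀ u, t0 ≤ u → u < w → δ ≤ Sub - s u := by
    intro u h1 h2
    exact Finset.min'_le _ _ (Finset.mem_image_of_mem _ (by simp [mem_Icc]; omega))
  have hcappos : 0 < (if 0 < pC w then pC w else (PD - pD w) / (ηC * ηD)) := by
    rcases hcap with h | h
    · rw [if_pos h]; exact h
    · by_cases h' : 0 < pC w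
      · rw [if_pos h']; exact h'
      · rw [if_neg h']; exact div_pos (by linarith) (by positivity)
  set cap := if 0 < pC w then pC w else (PD - pD w) / (ηC * ηD) with hcapdef
  set ε := min (min (δ / K) PC) cap with hεdef
  have hε : 0 < ε := lt_min (lt_min (by positivity) hPC) hcappos
  have hεPC : ε ≤ PC := le_trans (min_le_left _ _) (min_le_right _ _)
  have hεcap : ε ≤ cap := min_le_right _ _
  have hεK : K * ε ≤ δ := by
    have h1 : ε ≤ δ / K := le_trans (min_le_left _ _) (min_le_left _ _)
    calc K * ε ≤ K * (δ / K) := by nlinarith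
    _ = δ := by field_simp
  have hpow1 : ∀ u : ℕ, ρ ^ (u - t0) ≤ 1 := fun u => pow_le_one₀ (le_of_lt hρ0) hρ1
  have hpowpos : ∀ u : ℕ, 0 < ρ ^ (u - t0) := fun u => pow_pos hρ0 _
  set α := ρ ^ (w - t0) * ε with hαdef
  have hαpos : 0 < α := mul_pos (hpowpos w) hε
  have hαε : α ≤ ε := by nlinarith [hpow1 w, hpowpos w]
  set s' := fun u => if t0 ≤ u ∧ u < w then s u + K * ρ ^ (u - t0) * ε else s u with hs'def
  have hs'out : ∀ u, (u < t0 ∨ w ≤ u) → s' u = s u := by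
    intro u hu; simp only [hs'def]; rw [if_neg (by omega)]
  have hs'in : ∀ u, t0 ≤ u → u < w → s' u = s u + K * ρ ^ (u - t0) * ε := by
    intro u h1 h2; simp only [hs'def]; rw [if_pos ⟨h1, h2⟩]
  -- now pick variant controls
  obtain ⟨pC', pD', hCt0', hDt0', hCother, hDother, hatw, hbC, hbD, hterm2⟩ :
    ∃ pC' pD' : ℕ → ℝ, pC' t0 = ε ∧ pD' t0 = pD t0 ∧
      (∀ t, t ≠ t0 → t ≠ w → pC' t = pC t) ∧ (∀ t, t ≠ w → pD' t = pD t) ∧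
      Δt * (ηC * pC' w - (1/ηD) * pD' w) = Δt * (ηC * pC w - (1/ηD) * pD w) - K * α ∧
      (∀ t ∈ Icc 1 T, 0 ≤ pC' t ∧ pC' t ≤ PC) ∧
      (∀ t ∈ Icc 1 T, 0 ≤ pD' t ∧ pD' t ≤ PD) ∧
      0 ≤ Δt * C w * ((pD' w - pC' w) - (pD w - pC w)) := by
    by_cases hcw : 0 < pC w
    · have hεpCw : ε ≤ pC w := by rw [hcapdef, if_pos hcw] at hεcap; exact hεcap
      refine ⟨Function.update (Function.update pC t0 ε) w (pC w - α), pD, ?_,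
        rfl, ?_, fun t _ => rfl, ?_, ?_, hpDb, ?_⟩
      · rw [Function.update_of_ne (by omega), Function.update_self]
      · intro t h1 h2
        rw [Function.update_of_ne h2, Function.update_of_ne h1]
      · rw [Function.update_self, hKdef, hαdef]; ring
      · intro t ht
        rcases eq_or_ne t w with h | h
        · subst h
          rw [Function.update_self]
          have hb := hpCb t ht
          constructor
          · linarith
          · linarith [hαpos]
        · rw [Function.update_of_ne h]
          rcases eq_or_ne t t0 with h2 | h2
          · subst h2; rw [Function.update_self]; exact ⟨le_of_lt hε, hεPC⟩
          · rw [Function.update_of_ne h2]; exact hpCb t ht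
      · rw [Function.update_self]
        have h3 : (pD w - (pC w - α)) - (pD w - pC w) = α := by ring
        rw [h3]
        exact mul_nonneg (mul_nonneg hΔt.le hCw) hαpos.le
    · have hεpDw : ε ≤ (PD - pD w) / (ηC * ηD) := by
        rw [hcapdef, if_neg hcw] at hεcap; exact hεcap
      have hεpDw' : ε * (ηC * ηD) ≤ PD - pD w := (le_div_iff₀ (by positivity)).mp hεpDw
      refine ⟨Function.update pC t0 ε, Function.update pD w (pD w + ηC * ηD * α),
        Function.update_self _ _ _, ?_, ?_, ?_, ?_, ?_, ?_, ?_⟩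
      · rw [Function.update_of_ne (by omega : t0 ≠ w)]
      · intro t h1 _; rw [Function.update_of_ne h1]
      · intro t h1; rw [Function.update_of_ne h1]
      · rw [Function.update_of_ne (by omega : w ≠ t0), Function.update_self]
        field_simp
        ring
      · intro t ht
        rcases eq_or_ne t t0 with h2 | h2
        · subst h2; rw [Function.update_self]; exact ⟨le_of_lt hε, hεPC⟩
        · rw [Function.update_of_ne h2]; exact hpCb t ht
      · intro t ht
        rcases eq_or_ne t w with h2 | h2
        · subst h2
          rw [Function.update_self]
          have hb := hpDb t ht
          constructor
          · nlinarith [mul_pos (mul_pos hηC0 hηD0) hαpos]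
          · nlinarith [hαε, mul_pos hηC0 hηD0]
        · rw [Function.update_of_ne h2]; exact hpDb t ht
      · rw [Function.update_of_ne (by omega : w ≠ t0), Function.update_self]
        have h3 : (pD w + ηC * ηD * α - pC w) - (pD w - pC w) = ηC * ηD * α := by ring
        rw [h3]
        exact mul_nonneg (mul_nonneg hΔt.le hCw) (by positivity)
  have hαeq : α = ρ ^ (w - t0) * ε := hαdef
  clear hεdef hαdef hcapdef hδdef hs'def
  clear_value δ cap ε α s'
  have hfeas : feasible T Δt ρ ηC ηD Slb Sub Sinit PC PD s' pC' pD' := by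
    refine ⟨?_, ?_, ?_, hbC, hbD⟩
    · rw [hs'out 0 (by omega)]; exact hs0
    · intro t ht
      simp only [mem_Icc] at ht
      have hmem : t ∈ Icc 1 T := by simp [mem_Icc]; omega
      rcases Nat.lt_trichotomy t t0 with h | h | h
      · rw [hs'out t (by omega), hs'out (t-1) (by omega), hCother t (by omega) (by omega),
          hDother t (by omega)]
        exact hrec t hmem
      · subst h
        rw [hs'in t le_rfl htw, hs'out (t-1) (by omega), hCt0', hDt0']
        have := hrec t hmem
        rw [this, hpc, Nat.sub_self, pow_zero]
        ring
      · rcases Nat.lt_trichotomy t w with h2 | h2 | h2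
        · rw [hs'in t (by omega) h2, hs'in (t-1) (by omega) (by omega),
            hCother t (by omega) (by omega), hDother t (by omega)]
          have hrw := hrec t hmem
          have hpow : ρ ^ (t - t0) = ρ * ρ ^ (t - 1 - t0) := by
            have : t - t0 = (t - 1 - t0) + 1 := by omega
            rw [this, pow_succ]; ring
          rw [hrw, hpow]
          ring
        · subst h2
          rw [hs'out t (by omega), hs'in (t-1) (by omega) (by omega)]
          have hrw := hrec t hmem
          have heq : ρ * (s (t-1) + K * ρ ^ (t - 1 - t0) * ε)
              + Δt * (ηC * pC' t - (1/ηD) * pD' t)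
              = ρ * s (t-1) + Δt * (ηC * pC t - (1/ηD) * pD t)
                + (ρ * (K * ρ ^ (t - 1 - t0) * ε) - K * α) := by
            rw [hatw]; ring
          have hpow : ρ ^ (t - t0) = ρ * ρ ^ (t - 1 - t0) := by
            have : t - t0 = (t - 1 - t0) + 1 := by omega
            rw [this, pow_succ]; ring
          rw [heq, ← hrw, hαeq, hpow]
          ring
        · rw [hs'out t (by omega), hs'out (t-1) (by omega),
            hCother t (by omega) (by omega), hDother t (by omega)]
          exact hrec t hmem
    · intro t ht
      simp only [mem_Icc] at ht
      have hmem : t ∈ Icc 1 T := by simp [mem_Icc]; omega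
      by_cases h : t0 ≤ t ∧ t < w
      · rw [hs'in t h.1 h.2]
        have hb := hbnd t hmem
        have h1 : 0 ≤ K * ρ ^ (t - t0) * ε :=
          mul_nonneg (mul_nonneg hK.le (hpowpos t).le) hε.le
        have h2 : K * ρ ^ (t - t0) * ε ≤ K * ε := by nlinarith [hpow1 t, hpowpos t]
        have h3 := hδle t h.1 h.2
        constructor <;> linarith
      · rw [hs'out t (by omega)]; exact hbnd t hmem
  have hobj := obj_diff2 T Δt C pC pD pC' pD' t0 w (by simp [mem_Icc]; omega)
    (by simp [mem_Icc]; omega) (by omega)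
    (fun t ht h1 h2 => ⟨hCother t h1 h2, hDother t h2⟩)
  rw [hCt0', hDt0', hpc] at hobj
  have hle := hbest s' pC' pD' hfeas
  have hterm1 : Δt * C t0 * ((pD t0 - ε) - (pD t0 - 0)) = Δt * (-C t0) * ε := by ring
  have hpos1 : 0 < Δt * (-C t0) * ε := mul_pos (mul_pos hΔt (by linarith)) hε
  rw [hterm1] at hobj
  linarith

theorem stmt12 (T τ1 τ2 : ℕ) (Δt ρ ηC ηD Slb Sub Sinit PC PD : ℝ) (C : ℕ → ℝ)
    (hΔt : 0 < Δt) (hρ0 : 0 < ρ) (hρ1 : ρ ≤ 1)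
    (hηC0 : 0 < ηC) (hηC1 : ηC ≤ 1) (hηD0 : 0 < ηD) (hηD1 : ηD ≤ 1)
    (hη : ηC * ηD < 1)
    (hS0 : 0 ≤ Slb) (hS : Slb < Sub) (hPC : 0 < PC) (hPD : 0 < PD)
    (hinit0 : Slb ≤ Sinit) (hinit1 : Sinit ≤ Sub)
    (hleak : (1 - ρ) * Sub ≤ Δt * ηC * PC)
    (hτ1 : 1 ≤ τ1) (hτ12 : τ1 ≤ τ2) (hτ2T : τ2 ≤ T)
    (hneg : ∀ t ∈ Icc τ1 τ2, C t < 0)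
    (hlongest : ∀ a b : ℕ, 1 ≤ a → a ≤ b → b ≤ T → (∀ t ∈ Icc a b, C t < 0) →
      b + 1 - a ≤ τ2 + 1 - τ1)
    (hcond1 : Sub < ρ ^ (τ2 - τ1 + 1) * Slb +
      Δt * ηC * PC * ∑ t ∈ Icc 1 (τ2 - τ1 + 1), ρ ^ (τ2 - τ1 + 1 - t))
    (hcond2 : ¬ ∃ (TC TD : Finset ℕ) (sv : ℝ),
      TC ∪ TD = Icc τ1 τ2 ∧ Slb ≤ sv ∧ sv ≤ Sub ∧
      ρ ^ (τ2 - τ1 + 1) * sv +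
        Δt * (ηC * PC * ∑ t ∈ TC, ρ ^ (τ2 - t) -
          (1 / ηD) * PD * ∑ t ∈ TD, ρ ^ (τ2 - t)) = Sub) :
    ∀ s pC pD : ℕ → ℝ,
      optimal T Δt ρ ηC ηD Slb Sub Sinit PC PD C s pC pD →
      ∃ t ∈ Icc 1 T, 0 < pC t ∧ 0 < pD t := by
  intro s pC pD hopt
  by_contra hcon
  push_neg at hcon
  obtain ⟨hs0, hrec, hbnd, hpCbb, hpDbb⟩ := hopt.1
  have hbest := hopt.2
  have hns : ∀ t ∈ Icc 1 T, pC t = 0 ∨ pD t = 0 := by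
    intro t ht
    rcases lt_or_eq_of_le (hpCbb t ht).1 with h | h
    · right
      have := hcon t ht h
      linarith [(hpDbb t ht).1]
    · left; exact h.symm
  have hbang : ∀ t0 ∈ Icc 1 T, C t0 < 0 →
      (pC t0 = PC ∧ pD t0 = 0) ∨ (pD t0 = PD ∧ pC t0 = 0) :=
    burn T Δt ρ ηC ηD Slb Sub Sinit PC PD C s pC pD hΔt hηC0 hηD0 hη hPC hPD hopt hns
  set n := τ2 - τ1 + 1 with hndef
  -- the run-1 window
  have hbbrun : ∀ t ∈ Icc τ1 τ2, (pC t = PC ∧ pD t = 0) ∨ (pD t = PD ∧ pC t = 0) := by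
    intro t ht
    have htm := mem_Icc.mp ht
    exact hbang t (mem_Icc.mpr ⟨by omega, by omega⟩) (hneg t ht)
  obtain ⟨TC, TD, hUnion, hTCp, hTDp, hEq⟩ := window_eq T Δt ρ ηC ηD PC PD s pC pD hrec
    τ1 τ2 hτ1 hτ12 hτ2T hbbrun
  have hτeq : τ2 - τ1 + 1 = n := rfl
  rw [hτeq] at hEq
  -- sv bounds
  have hsv : Slb ≤ s (τ1 - 1) ∧ s (τ1 - 1) ≤ Sub := by
    rcases eq_or_ne τ1 1 with h | h
    · rw [h]; simp only [Nat.sub_self]; rw [hs0]; exact ⟨hinit0, hinit1⟩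
    · exact hbnd (τ1 - 1) (mem_Icc.mpr ⟨by omega, by omega⟩)
  -- reindex tool
  have hreindex : ∑ t ∈ Icc τ1 τ2, ρ ^ (τ2 - t) = ∑ t ∈ Icc 1 n, ρ ^ (n - t) := by
    have h1 : τ1 = 1 + (τ1 - 1) := by omega
    have h2 : τ2 = n + (τ1 - 1) := by omega
    calc ∑ t ∈ Icc τ1 τ2, ρ ^ (τ2 - t)
        = ∑ t ∈ Icc (1 + (τ1-1)) (n + (τ1-1)), ρ ^ (τ2 - t) := by rw [← h1, ← h2]
      _ = ∑ t ∈ Icc 1 n, ρ ^ (τ2 - (t + (τ1-1))) := sum_shift 1 n (τ1-1) _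
      _ = ∑ t ∈ Icc 1 n, ρ ^ (n - t) := by
          apply Finset.sum_congr rfl
          intro t ht
          have := mem_Icc.mp ht
          congr 1
          omega
  have hsub2 : s τ2 ≤ Sub := (hbnd τ2 (mem_Icc.mpr ⟨by omega, hτ2T⟩)).2
  -- TD nonempty
  have hTDne : TD.Nonempty := by
    rcases Finset.eq_empty_or_nonempty TD with h | h
    · exfalso
      rw [h, Finset.union_empty] at hUnion
      rw [h] at hEq
      simp only [Finset.sum_empty] at hEq
      rw [hUnion, hreindex] at hEq
      have hpow : (0:ℝ) ≤ ρ ^ n := by positivity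
      have : ρ ^ n * Slb ≤ ρ ^ n * s (τ1 - 1) :=
        mul_le_mul_of_nonneg_left hsv.1 hpow
      nlinarith [hcond1, hsub2, hEq]
    · exact h
  -- s τ2 < Sub
  have hs2lt : s τ2 < Sub := by
    rcases lt_or_eq_of_le hsub2 with h | h
    · exact h
    · exfalso
      apply hcond2
      refine ⟨TC, TD, s (τ1 - 1), hUnion, hsv.1, hsv.2, ?_⟩
      rw [← hEq]
      exact h
  -- last discharge period
  set tstar := TD.max' hTDne with htstardef
  have htstarTD : tstar ∈ TD := TD.max'_mem hTDne
  have htstarIcc : tstar ∈ Icc τ1 τ2 := by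
    rw [← hUnion]; exact Finset.mem_union_right _ htstarTD
  have htstarm := mem_Icc.mp htstarIcc
  have htstarp := hTDp tstar htstarTD
  have htstarC : C tstar < 0 := hneg tstar htstarIcc
  have hafter : ∀ t ∈ Icc τ1 τ2, tstar < t → pC t = PC ∧ pD t = 0 := by
    intro t ht h
    have : t ∉ TD := by
      intro hmem
      exact absurd (TD.le_max' t hmem) (by omega)
    rcases Finset.mem_union.mp (hUnion ▸ ht) with h2 | h2
    · exact hTCp t h2
    · exact absurd h2 this
  -- propagation: if SoC full somewhere in [tstar, τ2], it stays full until τ2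
  have hprop : ∀ k m, m + k = τ2 → tstar ≤ m → Sub ≤ s m → Sub ≤ s τ2 := by
    intro k
    induction k with
    | zero => intro m hm _ hS; rw [show m = τ2 by omega] at hS; exact hS
    | succ k ih =>
      intro m hm ht hS
      have hm1 : m + 1 ∈ Icc τ1 τ2 := mem_Icc.mpr ⟨by omega, by omega⟩
      obtain ⟨e1, e2⟩ := hafter (m+1) hm1 (by omega)
      have hr := hrec (m+1) (mem_Icc.mpr ⟨by omega, by omega⟩)
      rw [e1, e2] at hr
      simp only [Nat.add_sub_cancel] at hr
      have hmul : ρ * Sub ≤ ρ * s m := mul_le_mul_of_nonneg_left hS hρ0.le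
      have hnext : Sub ≤ s (m+1) := by
        rw [hr]; nlinarith [hleak]
      exact ih (m+1) (by omega) (by omega) hnext
  have hstrict : ∀ u, tstar ≤ u → u ≤ τ2 → s u < Sub := by
    intro u h1 h2
    by_contra h
    push_neg at h
    exact absurd (hprop (τ2 - u) u (by omega) h1 h) (by linarith)
  have htstar1T : tstar ∈ Icc 1 T := mem_Icc.mpr ⟨by omega, by omega⟩
  -- case split on existence of a later full-SoC time
  by_cases hD : ((Icc (τ2+1) T).filter (fun u => s u = Sub)).Nonempty
  · -- u0 exists
    set u0 := ((Icc (τ2+1) T).filter (fun u => s u = Sub)).min' hD with hu0def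
    have hu0mem := Finset.mem_filter.mp (Finset.min'_mem _ hD)
    rw [mem_Icc] at hu0mem
    obtain ⟨⟨hu0a, hu0b⟩, hu0s⟩ := hu0mem
    rw [← hu0def] at hu0a hu0b hu0s
    have hu0min : ∀ u, τ2 + 1 ≤ u → u ≤ T → s u = Sub → u0 ≤ u := by
      intro u h1 h2 h3
      exact Finset.min'_le _ u (by rw [Finset.mem_filter, mem_Icc]; exact ⟨⟨h1, h2⟩, h3⟩)
    have hslacku0 : ∀ u, tstar ≤ u → u < u0 → s u < Sub := by
      intro u h1 h2
      rcases le_or_gt u τ2 with h3 | h3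
      · exact hstrict u h1 h3
      · have hle := (hbnd u (mem_Icc.mpr ⟨by omega, by omega⟩)).2
        rcases lt_or_eq_of_le hle with h4 | h4
        · exact h4
        · exact absurd (hu0min u (by omega) (by omega) h4) (by omega)
    by_cases hdump : ∃ w ∈ Icc (τ2+1) u0, 0 ≤ C w ∧ (0 < pC w ∨ pD w < PD)
    · obtain ⟨w, hwmem, hCw, hcap⟩ := hdump
      have hwm := mem_Icc.mp hwmem
      exact imp2 T Δt ρ ηC ηD Slb Sub Sinit PC PD C s pC pD hΔt hρ0 hρ1 hηC0 hηC1 hηD0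
        hηD1 hPC hopt tstar w htstar1T (mem_Icc.mpr ⟨by omega, by omega⟩) (by omega)
        htstarC hCw htstarp.2 hcap (fun u h1 h2 => hslacku0 u h1 (by omega))
    · push_neg at hdump
      -- no dump: all nonneg-price times in (τ2, u0] are at full discharge
      have hnd : ∀ w ∈ Icc (τ2+1) u0, 0 ≤ C w → pC w = 0 ∧ pD w = PD := by
        intro w hw hCw
        obtain ⟨h1, h2⟩ := hdump w hw hCw
        have hwm := mem_Icc.mp hw
        have hw1T : w ∈ Icc 1 T := mem_Icc.mpr ⟨by omega, by omega⟩
        exact ⟨le_antisymm h1 (hpCbb w hw1T).1, le_antisymm (hpDbb w hw1T).2 h2⟩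
      -- the length-n window ending at u0 is all bang-bang
      set a := u0 - n + 1 with hadef
      have han : u0 - a + 1 = n := by omega
      have haτ : a = τ1 + (u0 - τ2) := by omega
      have hbb2 : ∀ t ∈ Icc a u0, (pC t = PC ∧ pD t = 0) ∨ (pD t = PD ∧ pC t = 0) := by
        intro t ht
        have htm := mem_Icc.mp ht
        have ht1T : t ∈ Icc 1 T := mem_Icc.mpr ⟨by omega, by omega⟩
        rcases lt_or_ge (C t) 0 with h | h
        · exact hbang t ht1T h
        · rcases le_or_gt t τ2 with h2 | h2
          · exact absurd (hneg t (mem_Icc.mpr ⟨by omega, h2⟩)) (by linarith)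
          · obtain ⟨e1, e2⟩ := hnd t (mem_Icc.mpr ⟨by omega, by omega⟩) h
            exact Or.inr ⟨e2, e1⟩
      obtain ⟨TC2, TD2, hUnion2, hTCp2, hTDp2, hEq2⟩ := window_eq T Δt ρ ηC ηD PC PD
        s pC pD hrec a u0 (by omega) (by omega) (by omega) hbb2
      rw [han] at hEq2
      have ha1 : a - 1 = u0 - n := by omega
      rw [ha1] at hEq2
      -- shift the window back to [τ1, τ2]
      set k := u0 - τ2 with hkdef
      have hTC2sub : TC2 ⊆ Icc a u0 := hUnion2 ▸ Finset.subset_union_left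
      have hTD2sub : TD2 ⊆ Icc a u0 := hUnion2 ▸ Finset.subset_union_right
      have himg : ∀ S : Finset ℕ, S ⊆ Icc a u0 →
          ∑ t ∈ S.image (fun t => t - k), ρ ^ (τ2 - t) = ∑ t ∈ S, ρ ^ (u0 - t) := by
        intro S hS
        rw [Finset.sum_image (by
          intro x hx y hy hxy
          have hx' := mem_Icc.mp (hS hx)
          have hy' := mem_Icc.mp (hS hy)
          simp only at hxy
          omega)]
        apply Finset.sum_congr rfl
        intro t ht
        have := mem_Icc.mp (hS ht)
        congr 1
        omega
      have hUnion' : TC2.image (fun t => t - k) ∪ TD2.image (fun t => t - k) = Icc τ1 τ2 := by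
        rw [← Finset.image_union, hUnion2]
        ext x
        simp only [Finset.mem_image, mem_Icc]
        constructor
        · rintro ⟨t, ⟨h1, h2⟩, rfl⟩
          omega
        · rintro ⟨h1, h2⟩
          exact ⟨x + k, ⟨by omega, by omega⟩, by omega⟩
      have hsv2 : Slb ≤ s (u0 - n) ∧ s (u0 - n) ≤ Sub :=
        hbnd (u0 - n) (mem_Icc.mpr ⟨by omega, by omega⟩)
      apply hcond2
      refine ⟨TC2.image (fun t => t - k), TD2.image (fun t => t - k), s (u0 - n),
        hUnion', hsv2.1, hsv2.2, ?_⟩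
      rw [himg TC2 hTC2sub, himg TD2 hTD2sub, ← hEq2]
      exact hu0s
  · -- no full SoC after τ2 : improve freely
    have hslackT : ∀ u ∈ Icc tstar T, s u < Sub := by
      intro u hu
      have hum := mem_Icc.mp hu
      rcases le_or_gt u τ2 with h | h
      · exact hstrict u hum.1 h
      · have hle := (hbnd u (mem_Icc.mpr ⟨by omega, hum.2⟩)).2
        rcases lt_or_eq_of_le hle with h4 | h4
        · exact h4
        · exfalso
          apply hD
          exact ⟨u, by rw [Finset.mem_filter, mem_Icc]; exact ⟨⟨by omega, hum.2⟩, h4⟩⟩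
    exact imp1 T Δt ρ ηC ηD Slb Sub Sinit PC PD C s pC pD hΔt hρ0 hρ1 hηC0 hPC hopt
      tstar htstar1T htstarC htstarp.2 hslackT
end

section
/- (Theorem 3: general exactness condition with multiple negative-price blocks.) Consider the storage scheduling LP with η < 1 and the assumption (1−ρ)·S_ub ≤ Δt·η^C·P^C_max. Write the horizon as an alternating sequence of positive-price blocks of lengths p_j and strictly-negative-price blocks of lengths n_j, j = 1, …, J. Define recursively Ŝ_0 = S^init and Ŝ_j = ρ^{n_j}·max{ρ^{p_j}·Ŝ_{j−1} − Δt·(1/η^D)·P^D_max·Σ_{t=1}^{p_j} ρ^{p_j−t}, S_lb} + Δt·η^C·P^C_max·Σ_{t=1}^{n_j} ρ^{n_j−t}. If Ŝ_j ≤ S_ub for all j = 1, …, J, then the linear relaxation is exact: there exists an optimal solution of the LP with no simultaneous charge and discharge. -/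
open Finset

def bnd (p n : ℕ → ℕ) : ℕ → ℕ
  | 0 => 0
  | j + 1 => bnd p n j + p (j + 1) + n (j + 1)

noncomputable def Shat (Δt ρ ηC ηD Slb PC PD Sinit : ℝ) (p n : ℕ → ℕ) : ℕ → ℝ
  | 0 => Sinit
  | j + 1 =>
      ρ ^ n (j + 1) *
        max (ρ ^ p (j + 1) * Shat Δt ρ ηC ηD Slb PC PD Sinit p n j -
          Δt * (1 / ηD) * PD * ∑ t ∈ Icc 1 (p (j + 1)), ρ ^ (p (j + 1) - t)) Slb +
      Δt * ηC * PC * ∑ t ∈ Icc 1 (n (j + 1)), ρ ^ (n (j + 1) - t)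

/-!
Start from an optimal schedule: one exists since the feasible set is compact and contains the
schedule that holds the state at `Sinit`. Let `f` be its net inflow, raised to the full charging
inflow at negative prices, and `W` the least state from which the inflows `f` keep the state
above `Slb`; `W` lies below the optimal state. The new schedule charges at full power at negative
prices and otherwise discharges at full power without going below `W`. Each of its steps is a pure
charge or a pure discharge, and its net discharge is at least the old one at nonnegative prices
and at most the old one at negative prices, so the objective does not decrease.

Its state stays above `W ≥ Slb` and below `max u W`, where `u` is the same greedy trajectory
with the constant floor `Slb`. At the block ends `u` takes the values `Shat j`; it cannot rise
above `Sub` along a positive block, and since `(1 - ρ) Sub ≤ Δt ηC PC`, once above `Sub` inside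
a negative block it stays above `Sub` to the end of the block.
-/

noncomputable section

def chargePower (Δt ηC F : ℝ) : ℝ := max F 0 / (Δt * ηC)

def dischargePower (Δt ηD F : ℝ) : ℝ := ηD * max (-F) 0 / Δt

section Split

variable {Δt ηC ηD : ℝ}

theorem chargePower_mul_dischargePower (F : ℝ) :
    chargePower Δt ηC F * dischargePower Δt ηD F = 0 := by
  rcases le_total F 0 with h | h
  · simp [chargePower, max_eq_right h]
  · simp [dischargePower, max_eq_right (neg_nonpos.2 h)]

theorem flow_chargePower_dischargePower (hΔt : Δt ≠ 0) (hηC : ηC ≠ 0) (hηD : ηD ≠ 0) (F : ℝ) :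
    Δt * (ηC * chargePower Δt ηC F - 1 / ηD * dischargePower Δt ηD F) = F := by
  unfold chargePower dischargePower
  field_simp
  exact max_zero_sub_max_neg_zero_eq_self F

theorem chargePower_nonneg (hΔt : 0 ≤ Δt) (hηC : 0 ≤ ηC) (F : ℝ) : 0 ≤ chargePower Δt ηC F := by
  unfold chargePower; positivity

theorem dischargePower_nonneg (hΔt : 0 ≤ Δt) (hηD : 0 ≤ ηD) (F : ℝ) :
    0 ≤ dischargePower Δt ηD F := by
  unfold dischargePower; positivity

theorem chargePower_le {PC F : ℝ} (hΔt : 0 < Δt) (hηC : 0 < ηC) (hPC : 0 ≤ PC)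
    (hF : F ≤ Δt * ηC * PC) : chargePower Δt ηC F ≤ PC := by
  rw [chargePower, div_le_iff₀ (by positivity), mul_comm PC]
  exact max_le hF (by positivity)

theorem dischargePower_le {PD F : ℝ} (hΔt : 0 < Δt) (hηD : 0 < ηD) (hPD : 0 ≤ PD)
    (hF : -(Δt * (1 / ηD) * PD) ≤ F) : dischargePower Δt ηD F ≤ PD := by
  rw [dischargePower, div_le_iff₀ hΔt]
  calc ηD * max (-F) 0 ≤ ηD * (Δt * (1 / ηD) * PD) := by
        gcongr
        exact max_le (by linarith) (by positivity)
    _ = PD * Δt := by field_simp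

theorem antitone_dischargePower_sub_chargePower (hΔt : 0 < Δt) (hηC : 0 < ηC) (hηD : 0 < ηD) :
    Antitone fun F => dischargePower Δt ηD F - chargePower Δt ηC F := by
  intro F G h
  simp only [dischargePower, chargePower]
  gcongr

theorem sub_le_dischargePower_sub_chargePower (hΔt : 0 < Δt) (hηC : 0 < ηC) (hηD : 0 < ηD)
    (hη : ηC * ηD ≤ 1) {pC pD : ℝ} (hpC : 0 ≤ pC) (hpD : 0 ≤ pD) :
    pD - pC ≤ dischargePower Δt ηD (Δt * (ηC * pC - 1 / ηD * pD)) -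
      chargePower Δt ηC (Δt * (ηC * pC - 1 / ηD * pD)) := by
  unfold dischargePower chargePower
  rcases le_total 0 (ηC * pC - 1 / ηD * pD) with h | h
  · rw [max_eq_right (by nlinarith), max_eq_left (by positivity)]
    field_simp
    nlinarith [mul_nonneg (mul_nonneg hΔt.le hpD) (sub_nonneg.2 hη)]
  · rw [max_eq_left (by nlinarith), max_eq_right (by nlinarith)]
    field_simp
    nlinarith [mul_nonneg (mul_nonneg (mul_nonneg hΔt.le hηC.le) hpC) (sub_nonneg.2 hη)]

theorem dischargePower_sub_chargePower_max_charge (hΔt : 0 < Δt) (hηC : 0 < ηC) {PC : ℝ}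
    (hPC : 0 ≤ PC) :
    dischargePower Δt ηD (Δt * ηC * PC) - chargePower Δt ηC (Δt * ηC * PC) = -PC := by
  have : -(Δt * ηC * PC) ≤ 0 := neg_nonpos.2 (by positivity)
  rw [dischargePower, chargePower, max_eq_right this, max_eq_left (by positivity)]
  field_simp
  ring

theorem dischargePower_sub_chargePower_max_discharge (hΔt : 0 < Δt) (hηD : 0 < ηD) {PD : ℝ}
    (hPD : 0 ≤ PD) :
    dischargePower Δt ηD (-(Δt * (1 / ηD) * PD)) - chargePower Δt ηC (-(Δt * (1 / ηD) * PD)) =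
      PD := by
  have : -(Δt * (1 / ηD) * PD) ≤ 0 := neg_nonpos.2 (by positivity)
  rw [dischargePower, chargePower, max_eq_left (neg_nonneg.2 this), max_eq_right this]
  field_simp
  ring

end Split

/-- The least state at time `t` from which the net inflows `f` keep the state above `Slb` until
time `T`. -/
def minState (ρ Slb : ℝ) (f : ℕ → ℝ) (T t : ℕ) : ℝ :=
  if t < T then max Slb ((minState ρ Slb f T (t + 1) - f (t + 1)) / ρ) else Slb
termination_by T - t

section MinState

variable {ρ Slb : ℝ} {f : ℕ → ℝ} {T : ℕ}

theorem le_minState (t : ℕ) : Slb ≤ minState ρ Slb f T t := by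
  rw [minState]
  split_ifs
  · exact le_max_left _ _
  · exact le_rfl

theorem mul_minState (hρ : 0 < ρ) {t : ℕ} (ht : t < T) :
    ρ * minState ρ Slb f T t = max (ρ * Slb) (minState ρ Slb f T (t + 1) - f (t + 1)) := by
  rw [minState, if_pos ht, mul_max_of_nonneg _ _ hρ.le, mul_div_cancel₀ _ hρ.ne']

theorem minState_le {x : ℕ → ℝ} (hρ : 0 < ρ) (hx : ∀ t ≤ T, Slb ≤ x t)
    (hstep : ∀ t < T, x (t + 1) - f (t + 1) ≤ ρ * x t) {t : ℕ} (ht : t ≤ T) :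
    minState ρ Slb f T t ≤ x t := by
  induction ht using Nat.decreasingInduction with
  | self => rw [minState, if_neg (lt_irrefl T)]; exact hx T le_rfl
  | of_succ k hk ih =>
    refine le_of_mul_le_mul_left ?_ hρ
    rw [mul_minState hρ hk]
    exact max_le (mul_le_mul_of_nonneg_left (hx k hk.le) hρ.le) (by linarith [hstep k hk])

end MinState

/-- With the floor `L = Slb` this is the trajectory whose values at the block ends are the
`Shat j`; with the floor `L = minState …` it is the improved, complementary schedule. -/
def greedyState (ρ c d x₀ : ℝ) (C L : ℕ → ℝ) : ℕ → ℝ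
  | 0 => x₀
  | t + 1 =>
      if C (t + 1) < 0 then ρ * greedyState ρ c d x₀ C L t + c
      else max (ρ * greedyState ρ c d x₀ C L t - d) (L (t + 1))

section Greedy

variable {ρ c d x₀ Slb : ℝ} {C L f : ℕ → ℝ} {T t : ℕ}

theorem greedyState_succ_of_neg (h : C (t + 1) < 0) :
    greedyState ρ c d x₀ C L (t + 1) = ρ * greedyState ρ c d x₀ C L t + c := by
  rw [greedyState, if_pos h]

theorem greedyState_succ_of_nonneg (h : 0 ≤ C (t + 1)) :
    greedyState ρ c d x₀ C L (t + 1) = max (ρ * greedyState ρ c d x₀ C L t - d) (L (t + 1)) := by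
  rw [greedyState, if_neg h.not_gt]

theorem le_greedyState_const (hρ : 0 ≤ ρ) (hx₀ : Slb ≤ x₀) (hc : (1 - ρ) * Slb ≤ c) (t : ℕ) :
    Slb ≤ greedyState ρ c d x₀ C (fun _ => Slb) t := by
  induction t with
  | zero => exact hx₀
  | succ t ih =>
    rcases lt_or_ge (C (t + 1)) 0 with h | h
    · rw [greedyState_succ_of_neg h]
      nlinarith
    · rw [greedyState_succ_of_nonneg h]
      exact le_max_right _ _

theorem minState_le_greedyState (hρ : 0 < ρ) (hx₀ : minState ρ Slb f T 0 ≤ x₀)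
    (hf : ∀ t, C t < 0 → f t = c) :
    ∀ t ≤ T, minState ρ Slb f T t ≤ greedyState ρ c d x₀ C (minState ρ Slb f T) t := by
  intro t ht
  induction t with
  | zero => exact hx₀
  | succ t ih =>
    rcases lt_or_ge (C (t + 1)) 0 with h | h
    · have hW := mul_minState (Slb := Slb) (f := f) hρ ht
      have hg := mul_le_mul_of_nonneg_left (ih (by omega)) hρ.le
      rw [greedyState_succ_of_neg h]
      linarith [hf _ h, le_max_right (ρ * Slb) (minState ρ Slb f T (t + 1) - f (t + 1))]
    · rw [greedyState_succ_of_nonneg h]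
      exact le_max_right _ _

theorem greedyState_le_max (hρ : 0 < ρ) (hSd : ρ * Slb - d ≤ Slb)
    (hu : ∀ t, Slb ≤ greedyState ρ c d x₀ C (fun _ => Slb) t)
    (hfc : ∀ t, C t < 0 → f t = c) (hfd : ∀ t < T, -d ≤ f (t + 1)) :
    ∀ t ≤ T, greedyState ρ c d x₀ C (minState ρ Slb f T) t ≤
      max (greedyState ρ c d x₀ C (fun _ => Slb) t) (minState ρ Slb f T t) := by
  intro t ht
  induction t with
  | zero => exact le_max_left _ _
  | succ t ih =>
    have hg := mul_le_mul_of_nonneg_left (ih (by omega)) hρ.le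
    rw [mul_max_of_nonneg _ _ hρ.le] at hg
    have hSu := mul_le_mul_of_nonneg_left (hu t) hρ.le
    have hfd := hfd t ht
    rcases lt_or_ge (C (t + 1)) 0 with h | h
    · rw [greedyState_succ_of_neg h, greedyState_succ_of_neg h]
      rcases le_max_iff.1 hg with hg | hg
      · exact le_max_of_le_left (by linarith)
      · rw [mul_minState hρ ht] at hg
        rcases le_max_iff.1 hg with hg | hg
        · exact le_max_of_le_left (by linarith)
        · exact le_max_of_le_right (by linarith [hfc _ h])
    · rw [greedyState_succ_of_nonneg h, greedyState_succ_of_nonneg h]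
      refine max_le ?_ (le_max_right _ _)
      rcases le_max_iff.1 hg with hg | hg
      · exact le_max_of_le_left (le_max_of_le_left (by linarith))
      · rw [mul_minState hρ ht] at hg
        rcases le_max_iff.1 hg with hg | hg
        · exact le_max_of_le_left (le_max_of_le_right (by linarith))
        · exact le_max_of_le_right (by linarith)

theorem neg_le_greedyState_succ_sub (hdc : -d ≤ c) :
    -d ≤ greedyState ρ c d x₀ C L (t + 1) - ρ * greedyState ρ c d x₀ C L t := by
  rcases lt_or_ge (C (t + 1)) 0 with h | h
  · rw [greedyState_succ_of_neg h]
    linarith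
  · rw [greedyState_succ_of_nonneg h]
    linarith [le_max_left (ρ * greedyState ρ c d x₀ C L t - d) (L (t + 1))]

theorem greedyState_succ_sub_le (hρ : 0 < ρ) (ht : t < T) (hC : 0 ≤ C (t + 1))
    (hW : minState ρ Slb f T t ≤ greedyState ρ c d x₀ C (minState ρ Slb f T) t) :
    greedyState ρ c d x₀ C (minState ρ Slb f T) (t + 1) -
        ρ * greedyState ρ c d x₀ C (minState ρ Slb f T) t ≤ max (-d) (f (t + 1)) := by
  have hW' := (le_max_right _ _).trans (mul_minState (Slb := Slb) (f := f) hρ ht).ge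
  have := mul_le_mul_of_nonneg_left hW hρ.le
  rw [greedyState_succ_of_nonneg hC, ← max_sub_sub_right]
  exact max_le_max (by linarith) (by linarith)

end Greedy

theorem forall_mem_Icc_one_of_forall_lt {P : ℕ → Prop} {T : ℕ} (h : ∀ t < T, P (t + 1)) :
    ∀ t ∈ Icc 1 T, P t := by
  intro t ht
  rw [mem_Icc] at ht
  obtain ⟨k, rfl⟩ : ∃ k, t = k + 1 := ⟨t - 1, by omega⟩
  exact h k (by omega)

theorem feasible_of_flow {T : ℕ} {Δt ρ ηC ηD Slb Sub Sinit PC PD : ℝ} {s : ℕ → ℝ}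
    (hΔt : 0 < Δt) (hηC : 0 < ηC) (hηD : 0 < ηD) (hPC : 0 ≤ PC) (hPD : 0 ≤ PD)
    (hs0 : s 0 = Sinit) (hs : ∀ t < T, Slb ≤ s (t + 1) ∧ s (t + 1) ≤ Sub)
    (hflow : ∀ t < T, -(Δt * (1 / ηD) * PD) ≤ s (t + 1) - ρ * s t ∧
      s (t + 1) - ρ * s t ≤ Δt * ηC * PC) :
    feasible T Δt ρ ηC ηD Slb Sub Sinit PC PD s
      (fun t => chargePower Δt ηC (s t - ρ * s (t - 1)))
      (fun t => dischargePower Δt ηD (s t - ρ * s (t - 1))) :=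
  ⟨hs0, fun t _ => by rw [flow_chargePower_dischargePower hΔt.ne' hηC.ne' hηD.ne']; ring,
    forall_mem_Icc_one_of_forall_lt hs,
    forall_mem_Icc_one_of_forall_lt fun t ht =>
      ⟨chargePower_nonneg hΔt.le hηC.le _, chargePower_le hΔt hηC hPC (hflow t ht).2⟩,
    forall_mem_Icc_one_of_forall_lt fun t ht =>
      ⟨dischargePower_nonneg hΔt.le hηD.le _, dischargePower_le hΔt hηD hPD (hflow t ht).1⟩⟩

theorem mul_sub_le_mul_dischargePower_sub_chargePower {Δt ηC ηD PC PD C pC pD F : ℝ}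
    (hΔt : 0 < Δt) (hηC : 0 < ηC) (hηD : 0 < ηD) (hη : ηC * ηD ≤ 1)
    (hpC : 0 ≤ pC ∧ pC ≤ PC) (hpD : 0 ≤ pD ∧ pD ≤ PD)
    (hneg : C < 0 → F = Δt * ηC * PC)
    (hnonneg : 0 ≤ C → F ≤ max (-(Δt * (1 / ηD) * PD)) (Δt * (ηC * pC - 1 / ηD * pD))) :
    Δt * C * (pD - pC) ≤ Δt * C * (dischargePower Δt ηD F - chargePower Δt ηC F) := by
  have hnet := antitone_dischargePower_sub_chargePower hΔt hηC hηD
  rcases lt_or_ge C 0 with hC | hC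
  · refine mul_le_mul_of_nonpos_left ?_ (by nlinarith)
    rw [hneg hC, dischargePower_sub_chargePower_max_charge hΔt hηC (by linarith)]
    linarith
  · refine mul_le_mul_of_nonneg_left ?_ (by positivity)
    rcases le_max_iff.1 (hnonneg hC) with hF | hF
    · refine le_trans ?_ (hnet hF)
      dsimp only
      rw [dischargePower_sub_chargePower_max_discharge hΔt hηD (by linarith)]
      linarith
    · exact (sub_le_dischargePower_sub_chargePower hΔt hηC hηD hη hpC.1 hpD.1).trans (hnet hF)

theorem flow_mem_of_feasible {T : ℕ} {Δt ρ ηC ηD Slb Sub Sinit PC PD : ℝ} {s pC pD : ℕ → ℝ}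
    (hΔt : 0 < Δt) (hηC : 0 < ηC) (hηD : 0 < ηD)
    (hfeas : feasible T Δt ρ ηC ηD Slb Sub Sinit PC PD s pC pD) {t : ℕ} (ht : t < T) :
    -(Δt * (1 / ηD) * PD) ≤ s (t + 1) - ρ * s t ∧ s (t + 1) - ρ * s t ≤ Δt * ηC * PC := by
  have hmem : t + 1 ∈ Icc 1 T := mem_Icc.2 ⟨by omega, by omega⟩
  obtain ⟨hpC0, hpC1⟩ := hfeas.2.2.2.1 _ hmem
  obtain ⟨hpD0, hpD1⟩ := hfeas.2.2.2.2 _ hmem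
  rw [hfeas.2.1 _ hmem, Nat.add_sub_cancel, add_sub_cancel_left]
  have : 0 ≤ Δt * ηC * pC (t + 1) := by positivity
  have : Δt * ηC * pC (t + 1) ≤ Δt * ηC * PC := by gcongr
  have : 0 ≤ Δt * (1 / ηD) * pD (t + 1) := by positivity
  have : Δt * (1 / ηD) * pD (t + 1) ≤ Δt * (1 / ηD) * PD := by gcongr
  constructor <;> linarith

theorem minState_le_of_feasible {T : ℕ} {Δt ρ ηC ηD Slb Sub Sinit PC PD : ℝ}
    {s pC pD f : ℕ → ℝ} (hρ : 0 < ρ) (hinit : Slb ≤ Sinit)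
    (hfeas : feasible T Δt ρ ηC ηD Slb Sub Sinit PC PD s pC pD)
    (hf : ∀ t < T, s (t + 1) - ρ * s t ≤ f (t + 1)) {t : ℕ} (ht : t ≤ T) :
    minState ρ Slb f T t ≤ s t := by
  refine minState_le hρ (fun t ht => ?_) (fun t ht => by linarith [hf t ht]) ht
  rcases t with _ | t
  · exact hfeas.1 ▸ hinit
  · exact (hfeas.2.2.1 _ (mem_Icc.2 ⟨by omega, ht⟩)).1

theorem objective_le_of_flow {T : ℕ} {Δt ρ ηC ηD Slb Sub Sinit PC PD : ℝ} {C s pC pD s' : ℕ → ℝ}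
    (hΔt : 0 < Δt) (hηC : 0 < ηC) (hηD : 0 < ηD) (hη : ηC * ηD ≤ 1)
    (hfeas : feasible T Δt ρ ηC ηD Slb Sub Sinit PC PD s pC pD)
    (hneg : ∀ t < T, C (t + 1) < 0 → s' (t + 1) - ρ * s' t = Δt * ηC * PC)
    (hnonneg : ∀ t < T, 0 ≤ C (t + 1) →
      s' (t + 1) - ρ * s' t ≤ max (-(Δt * (1 / ηD) * PD)) (s (t + 1) - ρ * s t)) :
    objective T Δt C pC pD ≤ objective T Δt C
      (fun t => chargePower Δt ηC (s' t - ρ * s' (t - 1)))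
      (fun t => dischargePower Δt ηD (s' t - ρ * s' (t - 1))) := by
  refine sum_le_sum (forall_mem_Icc_one_of_forall_lt fun t ht => ?_)
  have hmem : t + 1 ∈ Icc 1 T := mem_Icc.2 ⟨by omega, by omega⟩
  have hflow : s (t + 1) - ρ * s t = Δt * (ηC * pC (t + 1) - 1 / ηD * pD (t + 1)) := by
    rw [hfeas.2.1 _ hmem, Nat.add_sub_cancel, add_sub_cancel_left]
  simp only [Nat.add_sub_cancel]
  exact mul_sub_le_mul_dischargePower_sub_chargePower hΔt hηC hηD hη (hfeas.2.2.2.1 _ hmem)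
    (hfeas.2.2.2.2 _ hmem) (hneg t ht) (hflow ▸ hnonneg t ht)

theorem exists_complementary_improvement {T : ℕ} {Δt ρ ηC ηD Slb Sub Sinit PC PD : ℝ}
    {C s pC pD : ℕ → ℝ} (hΔt : 0 < Δt) (hρ0 : 0 < ρ) (hρ1 : ρ ≤ 1) (hηC : 0 < ηC)
    (hηD : 0 < ηD) (hη : ηC * ηD ≤ 1) (hS0 : 0 ≤ Slb) (hPC : 0 ≤ PC) (hPD : 0 ≤ PD)
    (hinit : Slb ≤ Sinit) (hc : (1 - ρ) * Slb ≤ Δt * ηC * PC)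
    (hfeas : feasible T Δt ρ ηC ηD Slb Sub Sinit PC PD s pC pD)
    (hbound : ∀ t ∈ Icc 1 T,
      greedyState ρ (Δt * ηC * PC) (Δt * (1 / ηD) * PD) Sinit C (fun _ => Slb) t ≤ Sub) :
    ∃ s' pC' pD', feasible T Δt ρ ηC ηD Slb Sub Sinit PC PD s' pC' pD' ∧
      objective T Δt C pC pD ≤ objective T Δt C pC' pD' ∧ ∀ t ∈ Icc 1 T, pC' t * pD' t = 0 := by
  have hmem : ∀ t < T, t + 1 ∈ Icc 1 T := fun t ht => mem_Icc.2 ⟨by omega, by omega⟩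
  have hflow := fun t (ht : t < T) => flow_mem_of_feasible hΔt hηC hηD hfeas ht
  set c := Δt * ηC * PC
  set d := Δt * (1 / ηD) * PD
  have hc0 : 0 ≤ c := by positivity
  have hd0 : 0 ≤ d := by positivity
  have hdc : -d ≤ c := by linarith
  set f : ℕ → ℝ := fun t => if C t < 0 then c else s t - ρ * s (t - 1)
  have hfc : ∀ t, C t < 0 → f t = c := fun t h => if_pos h
  have hf : ∀ t, 0 ≤ C (t + 1) → f (t + 1) = s (t + 1) - ρ * s t := fun t h => by
    simp [f, h.not_gt]
  set W := minState ρ Slb f T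
  set s' := greedyState ρ c d Sinit C W
  have hWs : ∀ t ≤ T, W t ≤ s t := fun t => minState_le_of_feasible hρ0 hinit hfeas fun t ht => by
    rcases lt_or_ge (C (t + 1)) 0 with h | h
    · exact hfc _ h ▸ (hflow t ht).2
    · exact (hf t h).ge
  have hWs' : ∀ t ≤ T, W t ≤ s' t := minState_le_greedyState hρ0 (hfeas.1 ▸ hWs 0 T.zero_le) hfc
  have hs' : ∀ t ≤ T, s' t ≤ max (greedyState ρ c d Sinit C (fun _ => Slb) t) (W t) :=
    greedyState_le_max hρ0 (by nlinarith) (le_greedyState_const hρ0.le hinit hc) hfc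
      fun t ht => by
        rcases lt_or_ge (C (t + 1)) 0 with h | h
        · rw [hfc _ h]; exact hdc
        · rw [hf t h]; exact (hflow t ht).1
  have hneg : ∀ t < T, C (t + 1) < 0 → s' (t + 1) - ρ * s' t = c := fun t _ h => by
    rw [show s' (t + 1) = ρ * s' t + c from greedyState_succ_of_neg h]; ring
  have hnonneg : ∀ t < T, 0 ≤ C (t + 1) → s' (t + 1) - ρ * s' t ≤ max (-d) (s (t + 1) - ρ * s t) :=
    fun t ht h => hf t h ▸ greedyState_succ_sub_le hρ0 ht h (hWs' t ht.le)
  refine ⟨s', _, _, feasible_of_flow hΔt hηC hηD hPC hPD rfl (fun t ht => ⟨?_, ?_⟩)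
    (fun t ht => ⟨neg_le_greedyState_succ_sub hdc, ?_⟩),
    objective_le_of_flow hΔt hηC hηD hη hfeas hneg hnonneg,
    fun t _ => chargePower_mul_dischargePower _⟩
  · exact (le_minState _).trans (hWs' _ ht)
  · exact (hs' _ ht).trans
      (max_le (hbound _ (hmem t ht)) ((hWs _ ht).trans (hfeas.2.2.1 _ (hmem t ht)).2))
  · rcases lt_or_ge (C (t + 1)) 0 with h | h
    · exact (hneg t ht h).le
    · exact (hnonneg t ht h).trans (max_le hdc (hflow t ht).2)

def stateOf (Δt ρ ηC ηD x₀ : ℝ) (pC pD : ℕ → ℝ) : ℕ → ℝ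
  | 0 => x₀
  | t + 1 => ρ * stateOf Δt ρ ηC ηD x₀ pC pD t + Δt * (ηC * pC (t + 1) - 1 / ηD * pD (t + 1))

/-- The power bounds are imposed at all times, not only on the horizon, to make this set
compact. -/
def admissiblePowers (T : ℕ) (Δt ρ ηC ηD Slb Sub Sinit PC PD : ℝ) :
    Set ((ℕ → ℝ) × (ℕ → ℝ)) :=
  (Set.univ.pi (fun _ => Set.Icc 0 PC) ×ˢ Set.univ.pi (fun _ => Set.Icc 0 PD)) ∩
    ⋂ t ∈ Icc 1 T, {z | stateOf Δt ρ ηC ηD Sinit z.1 z.2 t ∈ Set.Icc Slb Sub}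

section Optimal

variable {T : ℕ} {Δt ρ ηC ηD Slb Sub Sinit PC PD : ℝ}

theorem continuous_stateOf (t : ℕ) :
    Continuous fun z : (ℕ → ℝ) × (ℕ → ℝ) => stateOf Δt ρ ηC ηD Sinit z.1 z.2 t := by
  induction t with
  | zero => exact continuous_const
  | succ t ih => simp only [stateOf]; fun_prop

theorem isCompact_admissiblePowers :
    IsCompact (admissiblePowers T Δt ρ ηC ηD Slb Sub Sinit PC PD) :=
  ((isCompact_univ_pi fun _ => isCompact_Icc).prod
    (isCompact_univ_pi fun _ => isCompact_Icc)).inter_right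
    (isClosed_biInter fun t _ => isClosed_Icc.preimage (continuous_stateOf t))

theorem feasible_of_mem_admissiblePowers {z : (ℕ → ℝ) × (ℕ → ℝ)}
    (hz : z ∈ admissiblePowers T Δt ρ ηC ηD Slb Sub Sinit PC PD) :
    feasible T Δt ρ ηC ηD Slb Sub Sinit PC PD (stateOf Δt ρ ηC ηD Sinit z.1 z.2) z.1 z.2 := by
  obtain ⟨⟨hz1, hz2⟩, hz⟩ := hz
  simp only [Set.mem_iInter] at hz
  exact ⟨rfl, forall_mem_Icc_one_of_forall_lt fun t _ => rfl, hz,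
    fun t _ => hz1 t trivial, fun t _ => hz2 t trivial⟩

theorem stateOf_eq_of_feasible {s pC pD pC' pD' : ℕ → ℝ}
    (hfeas : feasible T Δt ρ ηC ηD Slb Sub Sinit PC PD s pC pD)
    (hC : ∀ t ∈ Icc 1 T, pC' t = pC t) (hD : ∀ t ∈ Icc 1 T, pD' t = pD t) {t : ℕ}
    (ht : t ≤ T) : stateOf Δt ρ ηC ηD Sinit pC' pD' t = s t := by
  induction t with
  | zero => exact hfeas.1.symm
  | succ t ih =>
    have hmem : t + 1 ∈ Icc 1 T := mem_Icc.2 ⟨by omega, ht⟩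
    rw [stateOf, ih (by omega), hC _ hmem, hD _ hmem, hfeas.2.1 _ hmem, Nat.add_sub_cancel]

theorem exists_mem_admissiblePowers_objective_eq (hPC : 0 ≤ PC) (hPD : 0 ≤ PD) (C : ℕ → ℝ)
    {s pC pD : ℕ → ℝ} (hfeas : feasible T Δt ρ ηC ηD Slb Sub Sinit PC PD s pC pD) :
    ∃ z ∈ admissiblePowers T Δt ρ ηC ηD Slb Sub Sinit PC PD,
      objective T Δt C z.1 z.2 = objective T Δt C pC pD := by
  classical
  let z : (ℕ → ℝ) × (ℕ → ℝ) :=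
    (fun t => if t ∈ Icc 1 T then pC t else 0, fun t => if t ∈ Icc 1 T then pD t else 0)
  have hz1 : ∀ t ∈ Icc 1 T, z.1 t = pC t := fun t ht => if_pos ht
  have hz2 : ∀ t ∈ Icc 1 T, z.2 t = pD t := fun t ht => if_pos ht
  refine ⟨z, ⟨⟨fun t _ => ?_, fun t _ => ?_⟩, ?_⟩,
    sum_congr rfl fun t ht => by rw [hz1 t ht, hz2 t ht]⟩
  · by_cases ht : t ∈ Icc 1 T
    · simpa [z, ht] using hfeas.2.2.2.1 t ht
    · simpa [z, ht] using hPC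
  · by_cases ht : t ∈ Icc 1 T
    · simpa [z, ht] using hfeas.2.2.2.2 t ht
    · simpa [z, ht] using hPD
  · simp only [Set.mem_iInter]
    intro t ht
    show _ ∈ Set.Icc Slb Sub
    rw [stateOf_eq_of_feasible hfeas hz1 hz2 (mem_Icc.1 ht).2]
    exact hfeas.2.2.1 t ht

theorem exists_optimal (C : ℕ → ℝ) {s₀ pC₀ pD₀ : ℕ → ℝ} (hPC : 0 ≤ PC) (hPD : 0 ≤ PD)
    (hfeas : feasible T Δt ρ ηC ηD Slb Sub Sinit PC PD s₀ pC₀ pD₀) :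
    ∃ s pC pD, optimal T Δt ρ ηC ηD Slb Sub Sinit PC PD C s pC pD := by
  obtain ⟨z₀, hz₀, -⟩ := exists_mem_admissiblePowers_objective_eq hPC hPD C hfeas
  have hcont : Continuous fun z : (ℕ → ℝ) × (ℕ → ℝ) => objective T Δt C z.1 z.2 := by
    unfold objective; fun_prop
  obtain ⟨z, hz, hmax⟩ := isCompact_admissiblePowers.exists_isMaxOn ⟨z₀, hz₀⟩ hcont.continuousOn
  refine ⟨_, z.1, z.2, feasible_of_mem_admissiblePowers hz, fun s pC pD h => ?_⟩
  obtain ⟨z', hz', hobj⟩ := exists_mem_admissiblePowers_objective_eq hPC hPD C h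
  exact hobj ▸ hmax hz'

theorem feasible_const_state (hΔt : 0 < Δt) (hηC : 0 < ηC) (hρ1 : ρ ≤ 1) (hS0 : 0 ≤ Slb)
    (hPD : 0 ≤ PD) (hinit0 : Slb ≤ Sinit) (hinit1 : Sinit ≤ Sub)
    (hleak : (1 - ρ) * Sub ≤ Δt * ηC * PC) :
    feasible T Δt ρ ηC ηD Slb Sub Sinit PC PD (fun _ => Sinit)
      (fun _ => (1 - ρ) * Sinit / (Δt * ηC)) (fun _ => 0) := by
  refine ⟨rfl, fun t _ => ?_, fun t _ => ⟨hinit0, hinit1⟩, fun t _ => ⟨?_, ?_⟩,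
    fun t _ => ⟨le_rfl, hPD⟩⟩
  · field_simp
    ring
  · have : 0 ≤ Sinit := hS0.trans hinit0
    have : 0 ≤ 1 - ρ := by linarith
    positivity
  · rw [div_le_iff₀ (by positivity)]
    nlinarith

end Optimal

theorem sum_Icc_one_pow_sub_succ (ρ : ℝ) (m : ℕ) :
    ∑ i ∈ Icc 1 (m + 1), ρ ^ (m + 1 - i) = ρ * ∑ i ∈ Icc 1 m, ρ ^ (m - i) + 1 := by
  rw [sum_Icc_succ_top (by omega), Nat.sub_self, pow_zero, mul_sum]
  congr 1
  refine sum_congr rfl fun i hi => ?_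
  rw [mem_Icc] at hi
  rw [show m + 1 - i = m - i + 1 by omega, pow_succ, mul_comm]

section Blocks

variable {ρ c d x₀ Slb Sub : ℝ} {C L : ℕ → ℝ}

theorem greedyState_add_of_neg {b m : ℕ} (hC : ∀ k < m, C (b + k + 1) < 0) :
    greedyState ρ c d x₀ C L (b + m) =
      ρ ^ m * greedyState ρ c d x₀ C L b + c * ∑ i ∈ Icc 1 m, ρ ^ (m - i) := by
  induction m with
  | zero => simp
  | succ m ih =>
    rw [← add_assoc, greedyState_succ_of_neg (hC m (by omega)), ih fun k hk => hC k (by omega),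
      sum_Icc_one_pow_sub_succ]
    ring

theorem greedyState_add_of_nonneg {b m : ℕ} (hρ : 0 ≤ ρ) (hd : ρ * Slb - d ≤ Slb)
    (hb : Slb ≤ greedyState ρ c d x₀ C (fun _ => Slb) b) (hC : ∀ k < m, 0 ≤ C (b + k + 1)) :
    greedyState ρ c d x₀ C (fun _ => Slb) (b + m) =
      max (ρ ^ m * greedyState ρ c d x₀ C (fun _ => Slb) b - d * ∑ i ∈ Icc 1 m, ρ ^ (m - i))
        Slb := by
  induction m with
  | zero => simpa using hb
  | succ m ih =>
    rw [← add_assoc, greedyState_succ_of_nonneg (hC m (by omega)), ih fun k hk => hC k (by omega),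
      mul_max_of_nonneg _ _ hρ, ← max_sub_sub_right, max_assoc, max_eq_right hd,
      sum_Icc_one_pow_sub_succ]
    congr 1
    ring

theorem greedyState_succ_le_of_nonneg (hρ1 : ρ ≤ 1) (hd : 0 ≤ d) (hSlb : Slb ≤ Sub)
    {t : ℕ} (h0 : 0 ≤ greedyState ρ c d x₀ C (fun _ => Slb) t) (hC : 0 ≤ C (t + 1))
    (ht : greedyState ρ c d x₀ C (fun _ => Slb) t ≤ Sub) :
    greedyState ρ c d x₀ C (fun _ => Slb) (t + 1) ≤ Sub := by
  rw [greedyState_succ_of_nonneg hC]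
  exact max_le (by nlinarith) hSlb

theorem greedyState_le_of_succ_le_of_neg (hρ : 0 < ρ) (hleak : (1 - ρ) * Sub ≤ c) {t : ℕ}
    (hC : C (t + 1) < 0) (h : greedyState ρ c d x₀ C L (t + 1) ≤ Sub) :
    greedyState ρ c d x₀ C L t ≤ Sub := by
  rw [greedyState_succ_of_neg hC] at h
  exact le_of_mul_le_mul_left (by linarith) hρ

end Blocks

theorem exists_lt_bnd_succ {p n : ℕ → ℕ} {J t : ℕ} (h0 : 0 < t) (ht : t ≤ bnd p n J) :
    ∃ j < J, bnd p n j < t ∧ t ≤ bnd p n (j + 1) := by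
  induction J with
  | zero => exact absurd ht (by rw [bnd]; omega)
  | succ J ih =>
    by_cases h : t ≤ bnd p n J
    · obtain ⟨j, hj, hj'⟩ := ih h
      exact ⟨j, by omega, hj'⟩
    · exact ⟨J, by omega, by omega, ht⟩

section Shat

variable {p n : ℕ → ℕ} {J : ℕ} {Δt ρ ηC ηD Slb Sub Sinit PC PD : ℝ} {C : ℕ → ℝ}

theorem greedyState_bnd_eq_Shat (hρ : 0 ≤ ρ) (hd : ρ * Slb - Δt * (1 / ηD) * PD ≤ Slb)
    (hu : ∀ t, Slb ≤ greedyState ρ (Δt * ηC * PC) (Δt * (1 / ηD) * PD) Sinit C (fun _ => Slb) t)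
    (hpos : ∀ j ∈ Icc 1 J, ∀ t : ℕ,
      bnd p n (j - 1) < t → t ≤ bnd p n (j - 1) + p j → 0 ≤ C t)
    (hneg : ∀ j ∈ Icc 1 J, ∀ t : ℕ,
      bnd p n (j - 1) + p j < t → t ≤ bnd p n j → C t < 0) {j : ℕ} (hj : j ≤ J) :
    greedyState ρ (Δt * ηC * PC) (Δt * (1 / ηD) * PD) Sinit C (fun _ => Slb) (bnd p n j) =
      Shat Δt ρ ηC ηD Slb PC PD Sinit p n j := by
  induction j with
  | zero => rfl
  | succ j ih =>
    have hj' : j + 1 ∈ Icc 1 J := mem_Icc.2 ⟨by omega, hj⟩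
    have hposj := hpos _ hj'
    have hnegj := hneg _ hj'
    simp only [Nat.add_sub_cancel] at hposj hnegj
    rw [show bnd p n (j + 1) = bnd p n j + p (j + 1) + n (j + 1) from rfl,
      greedyState_add_of_neg fun k hk => hnegj _ (by omega) (by rw [bnd]; omega),
      greedyState_add_of_nonneg hρ hd (hu _) fun k hk => hposj _ (by omega) (by omega),
      ih (by omega), Shat]

theorem greedyState_le_of_Shat_le (hΔt : 0 < Δt) (hρ0 : 0 < ρ) (hρ1 : ρ ≤ 1) (hηD : 0 < ηD)
    (hS0 : 0 ≤ Slb) (hS : Slb ≤ Sub) (hPD : 0 ≤ PD) (hinit0 : Slb ≤ Sinit)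
    (hinit1 : Sinit ≤ Sub) (hleak : (1 - ρ) * Sub ≤ Δt * ηC * PC)
    (hpos : ∀ j ∈ Icc 1 J, ∀ t : ℕ,
      bnd p n (j - 1) < t → t ≤ bnd p n (j - 1) + p j → 0 ≤ C t)
    (hneg : ∀ j ∈ Icc 1 J, ∀ t : ℕ,
      bnd p n (j - 1) + p j < t → t ≤ bnd p n j → C t < 0)
    (hShat : ∀ j ∈ Icc 1 J, Shat Δt ρ ηC ηD Slb PC PD Sinit p n j ≤ Sub) :
    ∀ t ∈ Icc 1 (bnd p n J),
      greedyState ρ (Δt * ηC * PC) (Δt * (1 / ηD) * PD) Sinit C (fun _ => Slb) t ≤ Sub := by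
  set u := greedyState ρ (Δt * ηC * PC) (Δt * (1 / ηD) * PD) Sinit C (fun _ => Slb)
  have hd : 0 ≤ Δt * (1 / ηD) * PD := by positivity
  have hu : ∀ t, Slb ≤ u t := le_greedyState_const hρ0.le hinit0 (by nlinarith)
  have hu_bnd : ∀ j ≤ J, u (bnd p n j) ≤ Sub := fun j hj => by
    refine (greedyState_bnd_eq_Shat hρ0.le (by nlinarith) hu hpos hneg hj).le.trans ?_
    rcases j with _ | j
    · exact hinit1
    · exact hShat _ (mem_Icc.2 ⟨by omega, hj⟩)
  intro t ht
  rw [mem_Icc] at ht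
  obtain ⟨j, hj, hlo, hhi⟩ := exists_lt_bnd_succ ht.1 ht.2
  have hj' : j + 1 ∈ Icc 1 J := mem_Icc.2 ⟨by omega, hj⟩
  have hposj := hpos _ hj'
  have hnegj := hneg _ hj'
  simp only [Nat.add_sub_cancel] at hposj hnegj
  by_cases hpart : t ≤ bnd p n j + p (j + 1)
  · have hfwd : ∀ k ≤ p (j + 1), u (bnd p n j + k) ≤ Sub := by
      intro k hk
      induction k with
      | zero => exact hu_bnd j hj.le
      | succ k ih =>
        rw [← add_assoc]
        exact greedyState_succ_le_of_nonneg (t := bnd p n j + k) hρ1 hd hS (hS0.trans (hu _))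
          (hposj _ (by omega) (by omega)) (ih (by omega))
    simpa [Nat.add_sub_cancel' hlo.le] using hfwd (t - bnd p n j) (by omega)
  · exact Nat.decreasingInduction' (P := fun m => u m ≤ Sub)
      (fun k hk htk ih => greedyState_le_of_succ_le_of_neg hρ0 hleak
        (hnegj _ (by omega) (by omega)) ih) hhi (hu_bnd _ hj)

end Shat

end

theorem stmt15_general (T J : ℕ) (p n : ℕ → ℕ) (Δt ρ ηC ηD Slb Sub Sinit PC PD : ℝ)
    (C : ℕ → ℝ)
    (hΔt : 0 < Δt) (hρ0 : 0 < ρ) (hρ1 : ρ ≤ 1)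
    (hηC0 : 0 < ηC) (hηD0 : 0 < ηD)
    (hη : ηC * ηD < 1)
    (hS0 : 0 ≤ Slb) (hS : Slb < Sub) (hPC : 0 < PC) (hPD : 0 < PD)
    (hinit0 : Slb ≤ Sinit) (hinit1 : Sinit ≤ Sub)
    (hleak : (1 - ρ) * Sub ≤ Δt * ηC * PC)
    (hT : T = bnd p n J)
    (hpos : ∀ j ∈ Icc 1 J, ∀ t : ℕ,
      bnd p n (j - 1) < t → t ≤ bnd p n (j - 1) + p j → 0 ≤ C t)
    (hneg : ∀ j ∈ Icc 1 J, ∀ t : ℕ,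
      bnd p n (j - 1) + p j < t → t ≤ bnd p n j → C t < 0)
    (hShat : ∀ j ∈ Icc 1 J, Shat Δt ρ ηC ηD Slb PC PD Sinit p n j ≤ Sub) :
    ∃ s pC pD : ℕ → ℝ,
      optimal T Δt ρ ηC ηD Slb Sub Sinit PC PD C s pC pD ∧
      ∀ t ∈ Icc 1 T, pC t * pD t = 0 := by
  subst hT
  have hc : (1 - ρ) * Slb ≤ Δt * ηC * PC := by nlinarith
  obtain ⟨s, pC, pD, hfeas, hopt⟩ := exists_optimal C hPC.le hPD.le
    (feasible_const_state (T := bnd p n J) (ηD := ηD) hΔt hηC0 hρ1 hS0 hPD.le hinit0 hinit1 hleak)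
  obtain ⟨s', pC', pD', hfeas', hobj, hcompl⟩ :=
    exists_complementary_improvement hΔt hρ0 hρ1 hηC0 hηD0 hη.le hS0 hPC.le hPD.le hinit0 hc hfeas
      (greedyState_le_of_Shat_le hΔt hρ0 hρ1 hηD0 hS0 hS.le hPD.le hinit0 hinit1 hleak hpos hneg
        hShat)
  exact ⟨s', pC', pD', ⟨hfeas', fun s'' pC'' pD'' h => (hopt _ _ _ h).trans hobj⟩, hcompl⟩

theorem stmt15 (T J : ℕ) (p n : ℕ → ℕ) (Δt ρ ηC ηD Slb Sub Sinit PC PD : ℝ)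
    (C : ℕ → ℝ)
    (hΔt : 0 < Δt) (hρ0 : 0 < ρ) (hρ1 : ρ ≤ 1)
    (hηC0 : 0 < ηC) (hηC1 : ηC ≤ 1) (hηD0 : 0 < ηD) (hηD1 : ηD ≤ 1)
    (hη : ηC * ηD < 1)
    (hS0 : 0 ≤ Slb) (hS : Slb < Sub) (hPC : 0 < PC) (hPD : 0 < PD)
    (hinit0 : Slb ≤ Sinit) (hinit1 : Sinit ≤ Sub)
    (hleak : (1 - ρ) * Sub ≤ Δt * ηC * PC)
    (hT : T = bnd p n J)
    (hpos : ∀ j ∈ Icc 1 J, ∀ t : ℕ,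
      bnd p n (j - 1) < t → t ≤ bnd p n (j - 1) + p j → 0 ≤ C t)
    (hneg : ∀ j ∈ Icc 1 J, ∀ t : ℕ,
      bnd p n (j - 1) + p j < t → t ≤ bnd p n j → C t < 0)
    (hShat : ∀ j ∈ Icc 1 J, Shat Δt ρ ηC ηD Slb PC PD Sinit p n j ≤ Sub) :
    ∃ s pC pD : ℕ → ℝ,
      optimal T Δt ρ ηC ηD Slb Sub Sinit PC PD C s pC pD ∧
      ∀ t ∈ Icc 1 T, pC t * pD t = 0 :=
  stmt15_general T J p n Δt ρ ηC ηD Slb Sub Sinit PC PD C hΔt hρ0 hρ1 hηC0 hηD0 hη hS0 hS hPC hPD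
    hinit0 hinit1 hleak hT hpos hneg hShat
end
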